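/- arXiv:1704.01050 — 4 statements merged into one kernel-verified Lean document; each statement's English description precedes it below -/
import Mathlib

section
/- Let T = ⟨A_0, A_1(1), …, A_{i−1}(i−1)⟩ be a Lefschetz decomposition of length i ≥ 1 of a triangulated category T with respect to an exact autoequivalence τ, and let 1 ≤ k ≤ i. Then the sequence of subcategories α_0^*(𝔞_0(1)), α_0^*(𝔞_1(2)), …, α_0^*(𝔞_{k−1}(k)) is semiorthogonal, and there is an equality of generated subcategories ⟨α_0^*(𝔞_0(1)), …, α_0^*(𝔞_{k−1}(k)), A_1(1), …, A_k(k)⟩ = ⟨A_0(1), A_1(2), …, A_{k−1}(k)⟩ inside T. In particular, taking k = i, the sequence α_0^*(𝔞_0(1)), α_0^*(𝔞_1(2)), …, α_0^*(𝔞_{i−1}(i)) gives a semiorthogonal decomposition A_0 = ⟨α_0^*(𝔞_0(1)), α_0^*(𝔞_1(2)), …, α_0^*(𝔞_{i−1}(i))⟩. -/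
/-!
Write `B m = A m (m)` for the pieces of the Lefschetz decomposition and `α = α₀^*`. An object
`q ∈ 𝔞_l(l+1)` is right orthogonal to `B m` for `m > l`, so its filtration stops at `B l`; its first
step is a triangle `q' → q → a` with `a ∈ A 0` and `q' ∈ ⟨B 1, …, B l⟩ ⊆ ^⊥(A 0)`, hence `a = α q`.
As `Hom(𝔞_j(j+1), ⟨B 1, …, B l⟩) = 0` for `j ≥ l`, maps from `𝔞_j(j+1)` to `α q` lift to `q`:
this gives the semiorthogonality, and fullness of `α` on `𝔞_l(l+1)`, whence its image is
triangulated. The same triangle trades `q` for `α q` in the generated subcategories. Finally each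
`t ∈ A 0` is filtered by the `A j (j+1)` (twist the filtration of `τ⁻¹ t`); `α` is exact and kills
`A (j+1) (j+1)`, so `α (A j (j+1)) = α (𝔞_j(j+1))`, and reflecting the filtration of `t` into `A 0`
decomposes it.
-/

namespace HPD

open CategoryTheory Category Limits Pretriangulated

universe w v u

variable {C : Type u} [Category.{v} C]

/-- The "essential image" of a set of objects under an assignment `Φ` on objects. -/
def essImageSet (Φ : C → C) (S : Set C) : Set C :=
  {Y : C | ∃ X ∈ S, Nonempty (Φ X ≅ Y)}

/-- The image of a set of objects under a functor to a full subcategory, regarded as a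
set of objects of the ambient category (closed under isomorphism). -/
def projImageSet {Z : C → Prop} (π : C ⥤ ObjectProperty.FullSubcategory Z) (S : Set C) : Set C :=
  essImageSet (fun X : C => (π.obj X).obj) S

section Preadd

variable [Preadditive C]

/-- `HomOrth B A` : every morphism from an object of `B` to an object of `A` vanishes. -/
def HomOrth (B A : Set C) : Prop :=
  ∀ ⦃X : C⦄, X ∈ B → ∀ ⦃Y : C⦄, Y ∈ A → ∀ f : X ⟶ Y, f = 0

/-- The right orthogonal `A^⊥` of a set of objects `A`. -/
def rightOrth (A : Set C) : Set C :=
  {Y : C | ∀ ⦃X : C⦄, X ∈ A → ∀ f : X ⟶ Y, f = 0}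

/-- The left orthogonal `^⊥A` of a set of objects `A`. -/
def leftOrth (A : Set C) : Set C :=
  {X : C | ∀ ⦃Y : C⦄, Y ∈ A → ∀ f : X ⟶ Y, f = 0}

/-- A subcategory (set of objects) is admissible if the inclusion of the corresponding
full subcategory admits both a left and a right adjoint. -/
def IsAdmissibleSub (A : Set C) : Prop :=
  (ObjectProperty.ι (· ∈ A)).IsRightAdjoint ∧
    (ObjectProperty.ι (· ∈ A)).IsLeftAdjoint

/-- `L : C ⥤ C` is a left mutation functor through `B`, i.e. it is (isomorphic to)
the composition `i_{B^⊥} ∘ i_{B^⊥}^*` of the left adjoint of the inclusion of the right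
orthogonal of `B` with this inclusion. -/
def IsLeftMutation (B : Set C) (L : C ⥤ C) : Prop :=
  ∃ p : C ⥤ ObjectProperty.FullSubcategory (· ∈ rightOrth B),
    Nonempty (p ⊣ ObjectProperty.ι (· ∈ rightOrth B)) ∧
      Nonempty (L ≅ p ⋙ ObjectProperty.ι (· ∈ rightOrth B))

end Preadd

section Triang

variable [HasZeroObject C] [Preadditive C] [HasShift C ℤ]
  [∀ n : ℤ, (shiftFunctor C n).Additive] [Pretriangulated C]

/-- A full triangulated subcategory, recorded as its (isomorphism-closed) set of objects. -/
structure IsTriangSub (A : Set C) : Prop where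
  zero_mem : ∀ ⦃Z : C⦄, IsZero Z → Z ∈ A
  iso_mem : ∀ ⦃X Y : C⦄, (X ≅ Y) → X ∈ A → Y ∈ A
  shift_mem : ∀ ⦃X : C⦄ (n : ℤ), X ∈ A → (X⟦n⟧ : C) ∈ A
  cone_mem : ∀ T : Triangle C, (T ∈ distTriang C) → T.obj₁ ∈ A → T.obj₂ ∈ A → T.obj₃ ∈ A

/-- A full triangulated subcategory is admissible if it moreover has the two adjoints. -/
def IsAdmissible (A : Set C) : Prop :=
  IsTriangSub A ∧ IsAdmissibleSub A

/-- The smallest full triangulated subcategory containing a given set of objects. -/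
def generated (S : Set C) : Set C :=
  ⋂₀ {P : Set C | IsTriangSub P ∧ S ⊆ P}

/-- A semiorthogonal sequence of subcategories: no nonzero morphisms from later to
earlier ones. -/
def Semiorthogonal {n : ℕ} (A : Fin n → Set C) : Prop :=
  ∀ ⦃l k : Fin n⦄, l < k → HomOrth (A k) (A l)

/-- `t` admits a filtration `0 = t_n → t_{n-1} → ⋯ → t_0 = t` whose successive cones lie
in the prescribed subcategories. -/
def HasFiltration {n : ℕ} (A : Fin n → Set C) (t : C) : Prop :=
  ∃ (F : Fin (n + 1) → C) (f : ∀ j : Fin n, F j.succ ⟶ F j.castSucc),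
    IsZero (F (Fin.last n)) ∧ F 0 = t ∧
      ∀ j : Fin n, ∃ (a : C) (g : F j.castSucc ⟶ a) (h : a ⟶ (F j.succ)⟦(1 : ℤ)⟧),
        (Triangle.mk (f j) g h ∈ distTriang C) ∧ a ∈ A j

/-- A semiorthogonal decomposition of (the bounded derived category) `C`. -/
structure IsSOD {n : ℕ} (A : Fin n → Set C) : Prop where
  triangSub : ∀ j, IsTriangSub (A j)
  semiorth : Semiorthogonal A
  filt : ∀ t : C, HasFiltration A t

/-- A semiorthogonal decomposition of a full triangulated subcategory `D` of `C`. -/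
structure IsSODWithin (D : Set C) {n : ℕ} (A : Fin n → Set C) : Prop where
  subset : ∀ j, A j ⊆ D
  triangSub : ∀ j, IsTriangSub (A j)
  semiorth : Semiorthogonal A
  filt : ∀ t ∈ D, HasFiltration A t

/-- The `n`-th power of an autoequivalence, applied to an object. -/
def twistFun (τ : C ≌ C) : ℤ → C → C
  | Int.ofNat m => (fun X : C => τ.functor.obj X)^[m]
  | Int.negSucc m => (fun X : C => τ.inverse.obj X)^[m + 1]

/-- The twist `S(n) = τⁿ(S)` of a set of objects (as an essential image). -/
def twistSet (τ : C ≌ C) (n : ℤ) (S : Set C) : Set C :=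
  essImageSet (twistFun τ n) S

/-- A Lefschetz decomposition of `C` of length `i` with respect to the autoequivalence `τ`:
`C = ⟨A 0, (A 1)(1), …, (A (i-1))(i-1)⟩` with `A 0 ⊇ A 1 ⊇ ⋯ ⊇ A (i-1)` admissible. -/
structure IsLefschetz (τ : C ≌ C) (i : ℕ) (A : ℕ → Set C) : Prop where
  pos : 0 < i
  desc : ∀ m : ℕ, m + 1 < i → A (m + 1) ⊆ A m
  adm : ∀ m : ℕ, m < i → IsAdmissible (A m)
  sod : IsSOD (fun j : Fin i => twistSet τ ((j : ℕ) : ℤ) (A (j : ℕ)))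

/-- The primitive component `𝔞_k`, the right orthogonal of `A (k+1)` inside `A k`. -/
def primComp (A : ℕ → Set C) (m : ℕ) : Set C :=
  A m ∩ rightOrth (A (m + 1))

/-- Composition of a finite family of endofunctors: `compFam L = L 0 ∘ L 1 ∘ ⋯ ∘ L (m-1)`
(so `L (m-1)` is applied first). -/
def compFam : ∀ {m : ℕ}, (Fin m → (C ⥤ C)) → (C ⥤ C)
  | 0, _ => 𝟭 C
  | _ + 1, L => compFam (fun j => L j.succ) ⋙ L 0

end Triang

section Serre

/-- A Serre functor on the `k`-linear triangulated category `C`: a `k`-linear exact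
autoequivalence `S` together with pairings exhibiting `Hom(X, Y) ≅ Hom(Y, S X)^*`
naturally in both variables. -/
structure SerreData (k : Type w) [Field k] (C : Type u) [Category.{v} C] [Preadditive C]
    [CategoryTheory.Linear k C] [HasZeroObject C] [HasShift C ℤ]
    [∀ n : ℤ, (shiftFunctor C n).Additive] [Pretriangulated C] where
  S : C ≌ C
  additive : S.functor.Additive
  linear : letI := additive; S.functor.Linear k
  commShift : S.functor.CommShift ℤ
  triangulated : letI := commShift; S.functor.IsTriangulated
  pairing : ∀ X Y : C, (X ⟶ Y) →ₗ[k] Module.Dual k (Y ⟶ S.functor.obj X)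
  pairing_bijective : ∀ X Y : C, Function.Bijective (pairing X Y)
  pairing_nat_left : ∀ ⦃X' X Y : C⦄ (a : X' ⟶ X) (φ : X ⟶ Y) (ψ : Y ⟶ S.functor.obj X'),
    pairing X' Y (a ≫ φ) ψ = pairing X Y φ (ψ ≫ S.functor.map a)
  pairing_nat_right : ∀ ⦃X Y Y' : C⦄ (b : Y ⟶ Y') (φ : X ⟶ Y) (ψ : Y' ⟶ S.functor.obj X),
    pairing X Y' (φ ≫ b) ψ = pairing X Y φ (b ≫ ψ)

end Serre

section Preadditive

variable [Preadditive C]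

lemma eq_zero_of_iso {X X' Y Y' : C} (e₁ : X' ≅ X) (e₂ : Y ≅ Y') (h : ∀ g : X ⟶ Y, g = 0)
    (f : X' ⟶ Y') : f = 0 := by
  simpa using congrArg (fun g => e₁.hom ≫ g ≫ e₂.hom) (h (e₁.inv ≫ f ≫ e₂.inv))

variable [HasShift C ℤ] [∀ n : ℤ, (shiftFunctor C n).Additive]

lemma hom_shift_eq_zero {X Y : C} {n : ℤ} (h : ∀ g : X⟦-n⟧ ⟶ Y, g = 0) (f : X ⟶ Y⟦n⟧) :
    f = 0 := by
  let adj : shiftFunctor C (-n) ⊣ shiftFunctor C n :=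
    (shiftEquiv' C (-n) n (neg_add_cancel n)).toAdjunction
  obtain ⟨g, rfl⟩ := (adj.homEquiv X Y).surjective f
  exact (congrArg _ (h g)).trans (adj.homAddEquiv_zero _ _)

lemma shift_hom_eq_zero {X Y : C} {n : ℤ} (h : ∀ g : X ⟶ Y⟦-n⟧, g = 0) (f : X⟦n⟧ ⟶ Y) :
    f = 0 := by
  let adj : shiftFunctor C n ⊣ shiftFunctor C (-n) := (shiftEquiv C n).toAdjunction
  obtain ⟨g, rfl⟩ := (adj.homEquiv X Y).symm.surjective f
  exact (congrArg _ (h g)).trans (adj.homAddEquiv_symm_zero _ _)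

end Preadditive

section Triangulated

variable [HasZeroObject C] [Preadditive C] [HasShift C ℤ]
  [∀ n : ℤ, (shiftFunctor C n).Additive] [Pretriangulated C]

lemma IsTriangSub.shift_closed {S : Set C} (hS : IsTriangSub S) :
    ∀ X ∈ S, ∀ n : ℤ, X⟦n⟧ ∈ S :=
  fun _ hX n => hS.shift_mem n hX

lemma isTriangSub_generated (S : Set C) : IsTriangSub (generated S) where
  zero_mem _ hZ _ hP := hP.1.zero_mem hZ
  iso_mem _ _ e hX _ hP := hP.1.iso_mem e (hX _ hP)
  shift_mem _ n hX _ hP := hP.1.shift_mem n (hX _ hP)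
  cone_mem T hT h₁ h₂ _ hP := hP.1.cone_mem T hT (h₁ _ hP) (h₂ _ hP)

lemma subset_generated (S : Set C) : S ⊆ generated S :=
  fun _ hx _ hP => hP.2 hx

lemma generated_minimal {S P : Set C} (hP : IsTriangSub P) (hSP : S ⊆ P) :
    generated S ⊆ P :=
  fun _ hx => hx P ⟨hP, hSP⟩

lemma generated_mono {S S' : Set C} (h : S ⊆ S') : generated S ⊆ generated S' :=
  generated_minimal (isTriangSub_generated S') (h.trans (subset_generated S'))

lemma isTriangSub_isZero : IsTriangSub {Z : C | IsZero Z} where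
  zero_mem _ hZ := hZ
  iso_mem _ _ e hX := hX.of_iso e.symm
  shift_mem _ _ hX := Functor.map_isZero _ hX
  cone_mem T hT h₁ h₂ := Triangle.isZero₃_of_isZero₁₂ T hT h₁ h₂

lemma IsTriangSub.inter {S S' : Set C} (h : IsTriangSub S) (h' : IsTriangSub S') :
    IsTriangSub (S ∩ S') where
  zero_mem _ hZ := ⟨h.zero_mem hZ, h'.zero_mem hZ⟩
  iso_mem _ _ e hX := ⟨h.iso_mem e hX.1, h'.iso_mem e hX.2⟩
  shift_mem _ n hX := ⟨h.shift_mem n hX.1, h'.shift_mem n hX.2⟩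
  cone_mem T hT h₁ h₂ := ⟨h.cone_mem T hT h₁.1 h₂.1, h'.cone_mem T hT h₁.2 h₂.2⟩

lemma isTriangSub_rightOrth {S : Set C} (hS : ∀ X ∈ S, ∀ n : ℤ, X⟦n⟧ ∈ S) :
    IsTriangSub (rightOrth S) where
  zero_mem _ hZ _ _ f := hZ.eq_of_tgt f 0
  iso_mem _ _ e hX _ hW f := eq_zero_of_iso (Iso.refl _) e (hX hW) f
  shift_mem _ n hX _ hW f := hom_shift_eq_zero (hX (hS _ hW (-n))) f
  cone_mem T hT h₁ h₂ W hW f := by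
    obtain ⟨g, rfl⟩ := Triangle.coyoneda_exact₃ T hT f
      (hom_shift_eq_zero (h₁ (hS _ hW (-1))) _)
    rw [h₂ hW g, zero_comp]

lemma isTriangSub_leftOrth {S : Set C} (hS : ∀ X ∈ S, ∀ n : ℤ, X⟦n⟧ ∈ S) :
    IsTriangSub (leftOrth S) where
  zero_mem _ hZ _ _ f := hZ.eq_of_src f 0
  iso_mem _ _ e hX _ hW f := eq_zero_of_iso e.symm (Iso.refl _) (hX hW) f
  shift_mem _ n hX _ hW f := shift_hom_eq_zero (hX (hS _ hW (-n))) f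
  cone_mem T hT h₁ h₂ W hW f := by
    obtain ⟨g, rfl⟩ := Triangle.yoneda_exact₃ T hT f (h₂ hW _)
    rw [shift_hom_eq_zero (h₁ (hS _ hW (-1))) g, comp_zero]

lemma isZero_of_mem_generated_of_mem_rightOrth {S : Set C}
    (hS : ∀ X ∈ S, ∀ n : ℤ, X⟦n⟧ ∈ S) {t : C} (ht : t ∈ generated S) (ht' : t ∈ rightOrth S) :
    IsZero t := by
  have hsub : generated S ⊆ leftOrth (rightOrth S) :=
    generated_minimal (isTriangSub_leftOrth (isTriangSub_rightOrth hS).shift_closed)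
      fun _ hX _ hY f => hY hX f
  exact (IsZero.iff_id_eq_zero t).2 (hsub ht ht' (𝟙 t))

lemma IsTriangSub.ext_mem {P : Set C} (hP : IsTriangSub P) {X Y Z : C} {u : X ⟶ Y} {v : Y ⟶ Z}
    {w : Z ⟶ X⟦(1 : ℤ)⟧} (hT : Triangle.mk u v w ∈ distTriang C) (hX : X ∈ P) (hZ : Z ∈ P) :
    Y ∈ P :=
  hP.cone_mem _ (inv_rot_of_distTriang _ hT) (hP.shift_mem (-1) hZ) hX

lemma distTriang_comp_iso₂ {X Y Z Y' : C} {u : X ⟶ Y} {v : Y ⟶ Z} {w : Z ⟶ X⟦(1 : ℤ)⟧}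
    (hT : Triangle.mk u v w ∈ distTriang C) (e : Y ≅ Y') :
    Triangle.mk (u ≫ e.hom) (e.inv ≫ v) w ∈ distTriang C :=
  isomorphic_distinguished _ hT _ <| Triangle.isoMk _ _ (Iso.refl _) e.symm (Iso.refl _)
    (by simp [Triangle.mk]) (by simp [Triangle.mk]) (by simp [Triangle.mk])

end Triangulated

section IteratedExtension

variable [HasZeroObject C] [Preadditive C] [HasShift C ℤ]
  [∀ n : ℤ, (shiftFunctor C n).Additive] [Pretriangulated C]

/-- An inductive, `ℕ`-indexed form of `HasFiltration`. -/
inductive IsIteratedExtension : (ℕ → Set C) → ℕ → C → Prop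
  | zero {A : ℕ → Set C} {t : C} : IsZero t → IsIteratedExtension A 0 t
  | cons {A : ℕ → Set C} {n : ℕ} {t' t a : C} (w : t' ⟶ t) (g : t ⟶ a) (h : a ⟶ t'⟦(1 : ℤ)⟧) :
      Triangle.mk w g h ∈ distTriang C → a ∈ A 0 →
      IsIteratedExtension (fun j => A (j + 1)) n t' → IsIteratedExtension A (n + 1) t

namespace IsIteratedExtension

lemma of_hasFiltration : ∀ {n : ℕ} {A : Fin n → Set C} {B : ℕ → Set C} {t : C},
    (∀ j : Fin n, A j ⊆ B j) → HasFiltration A t → IsIteratedExtension B n t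
  | 0, _, _, _, _, ⟨_, _, hz, rfl, _⟩ => .zero hz
  | _ + 1, A, _, _, hAB, ⟨F, f, hz, rfl, hF⟩ => by
    obtain ⟨a, g, h, hT, ha⟩ := hF 0
    exact .cons (f 0) g h hT (hAB 0 ha) (of_hasFiltration (A := fun j => A j.succ)
      (fun j => hAB j.succ) ⟨fun j => F j.succ, fun j => f j.succ, hz, rfl, fun j => hF j.succ⟩)

lemma hasFiltration {n : ℕ} {A : Fin n → Set C} {B : ℕ → Set C} {t : C}
    (hBA : ∀ j : Fin n, B j ⊆ A j) (ht : IsIteratedExtension B n t) : HasFiltration A t := by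
  induction ht with
  | zero hz => exact ⟨fun _ => _, fun j => j.elim0, hz, rfl, fun j => j.elim0⟩
  | cons w g h hT ha _ ih =>
    obtain ⟨F, f, hz, rfl, hF⟩ := ih (A := fun j => A j.succ) (fun j => hBA j.succ)
    exact ⟨Fin.cons _ F, Fin.cons w f, hz, rfl, Fin.cases ⟨_, g, h, hT, hBA 0 ha⟩ hF⟩

lemma mono {A B : ℕ → Set C} {n : ℕ} {t : C} (hAB : ∀ j < n, A j ⊆ B j)
    (ht : IsIteratedExtension A n t) : IsIteratedExtension B n t := by
  induction ht generalizing B with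
  | zero hz => exact .zero hz
  | cons w g h hT ha _ ih =>
    exact .cons w g h hT (hAB 0 (Nat.zero_lt_succ _) ha)
      (ih fun j hj => hAB (j + 1) (Nat.succ_lt_succ hj))

lemma of_iso {A : ℕ → Set C} {n : ℕ} {t s : C} (e : t ≅ s) (ht : IsIteratedExtension A n t) :
    IsIteratedExtension A n s := by
  cases ht with
  | zero hz => exact .zero (hz.of_iso e.symm)
  | cons w g h hT ha ht' =>
    exact .cons _ _ h (distTriang_comp_iso₂ hT e) ha ht'

lemma mem {A : ℕ → Set C} {n : ℕ} {t : C} {P : Set C} (hP : IsTriangSub P)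
    (hA : ∀ j < n, A j ⊆ P) (ht : IsIteratedExtension A n t) : t ∈ P := by
  induction ht with
  | zero hz => exact hP.zero_mem hz
  | cons w g h hT ha _ ih =>
    exact hP.ext_mem hT (ih fun j hj => hA (j + 1) (Nat.succ_lt_succ hj))
      (hA 0 (Nat.zero_lt_succ _) ha)

lemma truncate {A : ℕ → Set C} {n p : ℕ} {t : C} (hA : ∀ j < n, IsTriangSub (A j))
    (hsemi : ∀ l k, l < k → k < n → HomOrth (A k) (A l)) (ht : IsIteratedExtension A n t)
    (hp : p ≤ n) (horth : ∀ j, p ≤ j → j < n → t ∈ rightOrth (A j)) :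
    IsIteratedExtension A p t := by
  induction ht generalizing p with
  | zero hz => exact (Nat.le_zero.1 hp) ▸ .zero hz
  | @cons A n t' t a w g h hT ha ht' ih =>
    cases p with
    | zero =>
      refine .zero (isZero_of_mem_generated_of_mem_rightOrth (S := ⋃ j < n + 1, A j) ?_ ?_ ?_)
      · simp only [Set.mem_iUnion]
        rintro X ⟨j, hj, hX⟩ m
        exact ⟨j, hj, (hA j hj).shift_mem m hX⟩
      · have ht : IsIteratedExtension A (n + 1) t := .cons w g h hT ha ht'
        exact ht.mem (isTriangSub_generated _)
          fun j hj => (Set.subset_iUnion₂ (s := fun j (_ : j < n + 1) => A j) j hj).trans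
            (subset_generated _)
      · simp only [rightOrth, Set.mem_iUnion]
        rintro X ⟨j, hj, hX⟩
        exact horth j (Nat.zero_le j) hj hX
    | succ p =>
      refine .cons w g h hT ha (ih (fun j hj => hA (j + 1) (by omega))
        (fun l k hlk hk => hsemi (l + 1) (k + 1) (by omega) (by omega)) (by omega) ?_)
      intro j hpj hjn c hc f
      -- `f ≫ w = 0`, so `f` factors through `a⟦-1⟧ ⟶ t'`, and `Hom(A (j+1), A 0⟦-1⟧) = 0`.
      obtain ⟨f', rfl⟩ := Triangle.coyoneda_exact₂ _ (inv_rot_of_distTriang _ hT) f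
        (horth (j + 1) (by omega) (by omega) hc _)
      have hf' : f' = 0 := hom_shift_eq_zero (fun g' => hsemi 0 (j + 1) (by omega) (by omega)
        ((hA (j + 1) (by omega)).shift_mem _ hc) ha g') f'
      rw [hf']
      exact zero_comp

end IsIteratedExtension

end IteratedExtension

section Reflection

def IsReflection (A0 : Set C) {X a : C} (u : X ⟶ a) : Prop :=
  a ∈ A0 ∧ ∀ Y ∈ A0, Function.Bijective (fun g : a ⟶ Y => u ≫ g)

def reflectionImage (A0 S : Set C) : Set C :=
  {a | ∃ X ∈ S, ∃ u : X ⟶ a, IsReflection A0 u}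

variable {A0 : Set C}

lemma IsReflection.exists_iso {X a b : C} {u : X ⟶ a} {v : X ⟶ b} (hu : IsReflection A0 u)
    (hv : IsReflection A0 v) : ∃ e : a ≅ b, u ≫ e.hom = v := by
  obtain ⟨f, hf⟩ := (hu.2 b hv.1).surjective v
  obtain ⟨g, hg⟩ := (hv.2 a hu.1).surjective u
  simp only at hf hg
  refine ⟨⟨f, g, (hu.2 a hu.1).injective ?_, (hv.2 b hv.1).injective ?_⟩, hf⟩
  · simp only [reassoc_of% hf, hg, comp_id]
  · simp only [reassoc_of% hg, hf, comp_id]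

lemma isReflection_id {t : C} (ht : t ∈ A0) : IsReflection A0 (𝟙 t) := by
  refine ⟨ht, fun _ _ => ?_⟩
  simp only [id_comp]
  exact Function.bijective_id

lemma IsReflection.precomp {X X' a : C} {v : X' ⟶ X} {u : X ⟶ a}
    (hv : ∀ Y ∈ A0, Function.Bijective (fun g : X ⟶ Y => v ≫ g)) (hu : IsReflection A0 u) :
    IsReflection A0 (v ≫ u) := by
  refine ⟨hu.1, fun Y hY => ?_⟩
  simp only [assoc]
  exact (hv Y hY).comp (hu.2 Y hY)

lemma IsReflection.comp_iso (hA0 : ∀ ⦃X Y : C⦄, (X ≅ Y) → X ∈ A0 → Y ∈ A0) {X a b : C}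
    {u : X ⟶ a} (hu : IsReflection A0 u) (e : a ≅ b) : IsReflection A0 (u ≫ e.hom) := by
  refine ⟨hA0 e hu.1, fun Y hY => ?_⟩
  have he : Function.Bijective (fun g : b ⟶ Y => e.hom ≫ g) :=
    ⟨fun g₁ g₂ h => by simpa using congrArg (e.inv ≫ ·) h, fun g => ⟨e.inv ≫ g, by simp⟩⟩
  simp only [assoc]
  exact (hu.2 Y hY).comp he

lemma isReflection_unit {π : C ⥤ ObjectProperty.FullSubcategory (· ∈ A0)}
    (adj : π ⊣ ObjectProperty.ι (· ∈ A0)) (X : C) : IsReflection A0 (adj.unit.app X) := by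
  refine ⟨(π.obj X).property, fun Y hY => ?_⟩
  have h := (adj.homEquiv X ⟨Y, hY⟩).bijective.comp
    ⟨fun _ _ h => congrArg InducedCategory.Hom.hom h, ObjectProperty.homMk_surjective⟩
  simp only [Function.comp_def, Adjunction.homEquiv_unit] at h
  exact h

lemma projImageSet_eq_reflectionImage (hA0 : ∀ ⦃X Y : C⦄, (X ≅ Y) → X ∈ A0 → Y ∈ A0)
    {π : C ⥤ ObjectProperty.FullSubcategory (· ∈ A0)} (adj : π ⊣ ObjectProperty.ι (· ∈ A0))
    (S : Set C) : projImageSet π S = reflectionImage A0 S := by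
  ext a
  constructor
  · rintro ⟨X, hX, ⟨e⟩⟩
    exact ⟨X, hX, _, (isReflection_unit adj X).comp_iso hA0 e⟩
  · rintro ⟨X, hX, u, hu⟩
    obtain ⟨e, -⟩ := (isReflection_unit adj X).exists_iso hu
    exact ⟨X, hX, ⟨e⟩⟩

variable [HasShift C ℤ]

lemma IsReflection.shift (hA0 : ∀ X ∈ A0, ∀ n : ℤ, X⟦n⟧ ∈ A0) {X a : C} {u : X ⟶ a}
    (hu : IsReflection A0 u) (n : ℤ) : IsReflection A0 (u⟦n⟧') := by
  refine ⟨hA0 _ hu.1 n, fun Y hY => ?_⟩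
  let adj : shiftFunctor C n ⊣ shiftFunctor C (-n) := (shiftEquiv C n).toAdjunction
  have h := (adj.homEquiv X Y).symm.bijective.comp
    ((hu.2 _ (hA0 _ hY (-n))).comp (adj.homEquiv a Y).bijective)
  simpa only [Function.comp_def, adj.homEquiv_naturality_left_symm, Equiv.symm_apply_apply]
    using h

variable [HasZeroObject C] [Preadditive C] [∀ n : ℤ, (shiftFunctor C n).Additive]
  [Pretriangulated C]

open Preadditive

lemma precomp_bijective_of_distTriang {X' X a Y : C} {u' : X' ⟶ X} {u : X ⟶ a}
    {w : a ⟶ X'⟦(1 : ℤ)⟧} (hT : Triangle.mk u' u w ∈ distTriang C)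
    (h₀ : ∀ g : X' ⟶ Y, g = 0) (h₁ : ∀ g : X'⟦(1 : ℤ)⟧ ⟶ Y, g = 0) :
    Function.Bijective (fun g : a ⟶ Y => u ≫ g) := by
  refine ⟨fun g₁ g₂ hg => ?_, fun f => ?_⟩
  · obtain ⟨e, he⟩ := Triangle.yoneda_exact₃ _ hT (g₁ - g₂)
      ((comp_sub u g₁ g₂).trans (sub_eq_zero.2 hg))
    rw [← sub_eq_zero, he, h₁ e]
    exact comp_zero
  · obtain ⟨g, hg⟩ := Triangle.yoneda_exact₂ _ hT f (h₀ _)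
    exact ⟨g, hg.symm⟩

lemma isReflection_of_distTriang (hA0 : ∀ X ∈ A0, ∀ n : ℤ, X⟦n⟧ ∈ A0) {X' X a : C}
    {u' : X' ⟶ X} {u : X ⟶ a} {w : a ⟶ X'⟦(1 : ℤ)⟧} (hT : Triangle.mk u' u w ∈ distTriang C)
    (ha : a ∈ A0) (hX' : X' ∈ leftOrth A0) : IsReflection A0 u :=
  ⟨ha, fun _ hY => precomp_bijective_of_distTriang hT (hX' hY)
    ((isTriangSub_leftOrth hA0).shift_mem 1 hX' hY)⟩

section FiveLemma

variable (hA0 : ∀ X ∈ A0, ∀ n : ℤ, X⟦n⟧ ∈ A0) {T₁ T₂ : Triangle C} (hT₁ : T₁ ∈ distTriang C)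
  (hT₂ : T₂ ∈ distTriang C) (φ : T₁ ⟶ T₂) (h₁ : IsReflection A0 φ.hom₁)
  (h₂ : IsReflection A0 φ.hom₂)
include hA0 hT₁ hT₂ h₁ h₂

lemma IsReflection.eq_zero_of_hom₃_comp_eq_zero {Y : C} (hY : Y ∈ A0) (h : T₂.obj₃ ⟶ Y)
    (hh : φ.hom₃ ≫ h = 0) : h = 0 := by
  have hm₂ : T₂.mor₂ ≫ h = 0 := (h₂.2 Y hY).injective <| by
    simp only [comp_zero]
    rw [← reassoc_of% φ.comm₂, hh, comp_zero]
  obtain ⟨e, rfl⟩ := Triangle.yoneda_exact₃ _ hT₂ h hm₂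
  have hr : T₁.mor₃ ≫ φ.hom₁⟦(1 : ℤ)⟧' ≫ e = 0 := by rw [reassoc_of% φ.comm₃, hh]
  obtain ⟨χ, hχ⟩ := Triangle.yoneda_exact₃ _ (rot_of_distTriang _ hT₁) _ hr
  obtain ⟨χ', rfl⟩ := ((h₂.shift hA0 1).2 Y hY).surjective χ
  -- The rotated exact sequence forces `e` to factor through `T₂.mor₁⟦1⟧'`.
  have hχ' : φ.hom₁⟦(1 : ℤ)⟧' ≫ e = -((T₁.mor₁ ≫ φ.hom₂)⟦(1 : ℤ)⟧' ≫ χ') :=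
    by rw [hχ, Functor.map_comp_assoc]; exact neg_comp _ _
  have he : e = -(T₂.mor₁⟦(1 : ℤ)⟧' ≫ χ') := ((h₁.shift hA0 1).2 Y hY).injective <| by
    simp only [hχ', comp_neg, φ.comm₁, Functor.map_comp_assoc]
  rw [he, comp_neg, comp_distTriang_mor_zero₃₁_assoc _ hT₂, zero_comp, neg_zero]

lemma IsReflection.hom₃ (h₃ : T₂.obj₃ ∈ A0) : IsReflection A0 φ.hom₃ := by
  refine ⟨h₃, fun Y hY => ⟨fun g₁ g₂ hg => ?_, fun f => ?_⟩⟩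
  · rw [← sub_eq_zero]
    exact eq_zero_of_hom₃_comp_eq_zero hA0 hT₁ hT₂ φ h₁ h₂ hY _
      (by rw [comp_sub, sub_eq_zero]; exact hg)
  · obtain ⟨g, hg⟩ := (h₂.2 Y hY).surjective (T₁.mor₂ ≫ f)
    simp only at hg
    have hg₀ : T₂.mor₁ ≫ g = 0 := (h₁.2 Y hY).injective <| by
      simp only [comp_zero]
      rw [← reassoc_of% φ.comm₁, hg, comp_distTriang_mor_zero₁₂_assoc _ hT₁, zero_comp]
    obtain ⟨k, rfl⟩ := Triangle.yoneda_exact₂ _ hT₂ g hg₀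
    have hk : T₁.mor₂ ≫ (f - φ.hom₃ ≫ k) = 0 := by
      rw [comp_sub, reassoc_of% φ.comm₂, hg, sub_self]
    obtain ⟨e, he⟩ := Triangle.yoneda_exact₃ _ hT₁ _ hk
    obtain ⟨e', rfl⟩ := ((h₁.shift hA0 1).2 Y hY).surjective e
    refine ⟨k + T₂.mor₃ ≫ e', ?_⟩
    simp only at he ⊢
    rw [comp_add, ← reassoc_of% φ.comm₃, ← he]
    abel

end FiveLemma

end Reflection

section ReflectionOfExtensions

variable [HasZeroObject C] [Preadditive C] [HasShift C ℤ]
  [∀ n : ℤ, (shiftFunctor C n).Additive] [Pretriangulated C] {A0 : Set C}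

lemma IsReflection.hom₂ (hA0 : ∀ X ∈ A0, ∀ n : ℤ, X⟦n⟧ ∈ A0) {T₁ T₂ : Triangle C}
    (hT₁ : T₁ ∈ distTriang C) (hT₂ : T₂ ∈ distTriang C) (φ : T₁ ⟶ T₂)
    (h₁ : IsReflection A0 φ.hom₁) (h₃ : IsReflection A0 φ.hom₃) (h₂ : T₂.obj₂ ∈ A0) :
    IsReflection A0 φ.hom₂ :=
  IsReflection.hom₃ hA0 (inv_rot_of_distTriang _ hT₁) (inv_rot_of_distTriang _ hT₂)
    ((Pretriangulated.invRotate C).map φ) (h₃.shift hA0 (-1)) h₁ h₂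

lemma IsIteratedExtension.exists_isReflection (hA0 : IsTriangSub A0) {S P : ℕ → Set C} {n : ℕ}
    {X : C} (hS : ∀ j < n, ∀ a ∈ S j, ∃ b, ∃ u : a ⟶ b, IsReflection A0 u ∧ b ∈ P j)
    (hX : IsIteratedExtension S n X) :
    ∃ G, ∃ u : X ⟶ G, IsReflection A0 u ∧ IsIteratedExtension P n G := by
  induction hX generalizing P with
  | zero hz => exact ⟨_, 𝟙 _, isReflection_id (hA0.zero_mem hz), .zero hz⟩
  | @cons S n X' X a w g h hT ha _ ih =>
    obtain ⟨G', u', hu', hG'⟩ := ih (P := fun j => P (j + 1)) fun j hj => hS (j + 1) (by omega)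
    obtain ⟨b, v, hv, hb⟩ := hS 0 (Nat.zero_lt_succ n) a ha
    obtain ⟨h', hh'⟩ := (hv.2 _ (hA0.shift_mem 1 hu'.1)).surjective (h ≫ u'⟦(1 : ℤ)⟧')
    obtain ⟨Q, q₁, q₂, hTQ⟩ := distinguished_cocone_triangle₂ h'
    obtain ⟨u, hu₁, hu₂⟩ := complete_distinguished_triangle_morphism₂ _ _ hT hTQ u' v hh'.symm
    refine ⟨Q, u, ?_, .cons q₁ q₂ h' hTQ hb hG'⟩
    exact IsReflection.hom₂ hA0.shift_closed hT hTQ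
      { hom₁ := u', hom₂ := u, hom₃ := v, comm₁ := hu₁, comm₂ := hu₂, comm₃ := hh'.symm }
      hu' hv (hA0.cone_mem _ (inv_rot_of_distTriang _ hTQ) (hA0.shift_mem (-1) hv.1) hu'.1)

lemma isTriangSub_reflectionImage (hA0 : IsTriangSub A0) {Q : Set C} (hQ : IsTriangSub Q)
    (hlift : ∀ q₁ ∈ Q, ∀ q₂ ∈ Q, ∀ a, ∀ u : q₂ ⟶ a, IsReflection A0 u →
      ∀ f : q₁ ⟶ a, ∃ g : q₁ ⟶ q₂, g ≫ u = f) :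
    IsTriangSub (reflectionImage A0 Q) where
  zero_mem _ hZ := ⟨_, hQ.zero_mem hZ, _, isReflection_id (hA0.zero_mem hZ)⟩
  iso_mem _ _ e := fun ⟨q, hq, u, hu⟩ => ⟨q, hq, _, hu.comp_iso hA0.iso_mem e⟩
  shift_mem _ n := fun ⟨q, hq, u, hu⟩ =>
    ⟨_, hQ.shift_mem n hq, _, hu.shift hA0.shift_closed n⟩
  cone_mem T hT := fun ⟨q₁, hq₁, u₁, hu₁⟩ ⟨q₂, hq₂, u₂, hu₂⟩ => by
    obtain ⟨g, hg⟩ := hlift q₁ hq₁ q₂ hq₂ _ u₂ hu₂ (u₁ ≫ T.mor₁)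
    obtain ⟨q₃, g₂, g₃, hTq⟩ := distinguished_cocone_triangle g
    obtain ⟨u₃, hc₂, hc₃⟩ :=
      complete_distinguished_triangle_morphism _ _ hTq hT u₁ u₂ hg
    refine ⟨q₃, hQ.cone_mem _ hTq hq₁ hq₂, u₃, ?_⟩
    exact IsReflection.hom₃ hA0.shift_closed hTq hT
      { hom₁ := u₁, hom₂ := u₂, hom₃ := u₃, comm₁ := hg, comm₂ := hc₂, comm₃ := hc₃ }
      hu₁ hu₂ (hA0.cone_mem T hT hu₁.1 hu₂.1)

end ReflectionOfExtensions

section Coreflection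

variable [HasZeroObject C] [Preadditive C] [HasShift C ℤ]
  [∀ n : ℤ, (shiftFunctor C n).Additive] [Pretriangulated C]

lemma exists_distTriang_mem_rightOrth {B : Set C} (hB : ∀ X ∈ B, ∀ n : ℤ, X⟦n⟧ ∈ B)
    [(ObjectProperty.ι (· ∈ B)).IsLeftAdjoint] (a : C) :
    ∃ (x q : C) (u : x ⟶ a) (v : a ⟶ q) (w : q ⟶ x⟦(1 : ℤ)⟧),
      Triangle.mk u v w ∈ distTriang C ∧ x ∈ B ∧ q ∈ rightOrth B := by
  let adj := Adjunction.ofIsLeftAdjoint (ObjectProperty.ι (· ∈ B))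
  let ε := adj.counit.app a
  have hε : ∀ c ∈ B, Function.Bijective (fun g : c ⟶ _ => g ≫ ε) := by
    intro c hc
    have h := (adj.homEquiv ⟨c, hc⟩ a).symm.bijective.comp
      ⟨fun _ _ h => congrArg InducedCategory.Hom.hom h, ObjectProperty.homMk_surjective⟩
    simp only [Function.comp_def, Adjunction.homEquiv_counit] at h
    exact h
  obtain ⟨q, v, w, hT⟩ := distinguished_cocone_triangle ε
  refine ⟨_, q, ε, v, w, hT, ((ObjectProperty.ι (· ∈ B)).rightAdjoint.obj a).property,
    fun c hc f => ?_⟩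
  -- `f ≫ w = 0` because its adjoint `c⟦-1⟧ ⟶ x` vanishes after composition with `ε`.
  let sadj : shiftFunctor C (-1 : ℤ) ⊣ shiftFunctor C (1 : ℤ) :=
    (shiftEquiv' C (-1) 1 (neg_add_cancel 1)).toAdjunction
  have hwε : w ≫ ε⟦(1 : ℤ)⟧' = 0 := comp_distTriang_mor_zero₃₁ _ hT
  have hw : f ≫ w = 0 := by
    obtain ⟨g, hg⟩ := (sadj.homEquiv c _).surjective (f ≫ w)
    have hgε : g ≫ ε = 0 ≫ ε := by
      apply (sadj.homEquiv _ _).injective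
      rw [sadj.homEquiv_naturality_right, hg, assoc, hwε, comp_zero,
        zero_comp, sadj.homAddEquiv_zero]
    rw [← hg, (hε _ (hB _ hc (-1))).injective hgε, sadj.homAddEquiv_zero]
  obtain ⟨g, rfl⟩ := Triangle.coyoneda_exact₃ _ hT f hw
  obtain ⟨g', rfl⟩ := (hε c hc).surjective g
  exact (assoc _ _ _).trans ((congrArg _ (comp_distTriang_mor_zero₁₂ _ hT)).trans comp_zero)

end Coreflection

section Twist

lemma essImageSet_subset_essImageSet_comp (F G : C ⥤ C) (S : Set C) :
    essImageSet G.obj (essImageSet F.obj S) ⊆ essImageSet (F ⋙ G).obj S :=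
  fun _ ⟨_, ⟨X, hX, ⟨e⟩⟩, ⟨e'⟩⟩ => ⟨X, hX, ⟨G.mapIso e ≪≫ e'⟩⟩

variable (τ : C ≌ C)

/-- `τ^m` as a functor; on objects it agrees with `twistFun τ m`. -/
def twistFunctor : ℕ → C ⥤ C
  | 0 => 𝟭 C
  | m + 1 => twistFunctor m ⋙ τ.functor

instance instFullTwistFunctor : ∀ m, (twistFunctor τ m).Full
  | 0 => inferInstanceAs (𝟭 C).Full
  | m + 1 =>
    have := instFullTwistFunctor m
    inferInstanceAs (twistFunctor τ m ⋙ τ.functor).Full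

lemma twistSet_natCast (m : ℕ) (S : Set C) :
    twistSet τ m S = essImageSet (twistFunctor τ m).obj S := by
  suffices h : twistFun τ m = (twistFunctor τ m).obj by rw [twistSet, h]
  funext X
  induction m with
  | zero => rfl
  | succ m ih => exact (Function.iterate_succ_apply' _ _ _).trans (congrArg τ.functor.obj ih)

lemma twistFunctor_obj_add (a b : ℕ) (X : C) :
    (twistFunctor τ (a + b)).obj X = (twistFunctor τ b).obj ((twistFunctor τ a).obj X) := by
  induction b with
  | zero => rfl
  | succ b ih => exact congrArg τ.functor.obj ih

variable {τ}

lemma twistSet_mono {n : ℤ} {S S' : Set C} (h : S ⊆ S') : twistSet τ n S ⊆ twistSet τ n S' :=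
  fun _ ⟨X, hX, e⟩ => ⟨X, h hX, e⟩

lemma twistSet_zero {S : Set C} (hS : ∀ ⦃X Y : C⦄, (X ≅ Y) → X ∈ S → Y ∈ S) :
    twistSet τ 0 S = S :=
  Set.ext fun _ => ⟨fun ⟨_, hX, ⟨e⟩⟩ => hS e hX, fun hx => ⟨_, hx, ⟨Iso.refl _⟩⟩⟩

lemma components_subset_twistSet_succ {A : ℕ → Set C} {l k : ℕ} (hlk : l ≤ k) :
    (⋃ m ∈ Set.Icc 1 l, twistSet τ m (A m)) ⊆
      ⋃ j : Fin k, twistSet τ ((j : ℕ) + 1 : ℤ) (A ((j : ℕ) + 1)) := by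
  refine Set.iUnion₂_subset fun m hm => ?_
  obtain ⟨n, rfl⟩ := Nat.exists_eq_add_of_le' hm.1
  exact Set.subset_iUnion_of_subset ⟨n, by have := hm.2; omega⟩ subset_rfl

variable [Preadditive C]

lemma homOrth_twistSet {a b : ℕ} (hba : b ≤ a) {S S' : Set C}
    (h : ∀ X ∈ S, ∀ Y ∈ S', ∀ g : (twistFunctor τ (a - b)).obj X ⟶ Y, g = 0) :
    HomOrth (twistSet τ a S) (twistSet τ b S') := by
  rw [twistSet_natCast, twistSet_natCast]
  rintro x ⟨X, hX, ⟨ex⟩⟩ y ⟨Y, hY, ⟨ey⟩⟩ f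
  have hX' : (twistFunctor τ a).obj X =
      (twistFunctor τ b).obj ((twistFunctor τ (a - b)).obj X) := by
    rw [← twistFunctor_obj_add, Nat.sub_add_cancel hba]
  refine eq_zero_of_iso (ex.symm ≪≫ eqToIso hX') ey (fun g => ?_) f
  obtain ⟨g, rfl⟩ := (twistFunctor τ b).map_surjective g
  rw [h X hX Y hY g, Functor.map_zero]

variable [HasZeroObject C] [HasShift C ℤ] [∀ n : ℤ, (shiftFunctor C n).Additive]
  [Pretriangulated C]

open ZeroObject in
lemma IsTriangSub.essImageSet {S : Set C} (hS : IsTriangSub S) (F : C ⥤ C) [F.CommShift ℤ]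
    [F.IsTriangulated] [F.Full] : IsTriangSub (essImageSet F.obj S) where
  zero_mem Z hZ := ⟨0, hS.zero_mem (isZero_zero C),
    ⟨(F.map_isZero (isZero_zero C)).isoZero ≪≫ hZ.isoZero.symm⟩⟩
  iso_mem _ _ e := fun ⟨X, hX, ⟨e'⟩⟩ => ⟨X, hX, ⟨e' ≪≫ e⟩⟩
  shift_mem _ n := fun ⟨X, hX, ⟨e⟩⟩ =>
    ⟨X⟦n⟧, hS.shift_mem n hX, ⟨(F.commShiftIso n).app X ≪≫ (shiftFunctor C n).mapIso e⟩⟩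
  cone_mem T hT := fun ⟨X₁, hX₁, ⟨e₁⟩⟩ ⟨X₂, hX₂, ⟨e₂⟩⟩ => by
    obtain ⟨g, hg⟩ := F.map_surjective (e₁.hom ≫ T.mor₁ ≫ e₂.inv)
    obtain ⟨X₃, u, v, hT₃⟩ := distinguished_cocone_triangle g
    have e := isoTriangleOfIso₁₂ _ _ (F.map_distinguished _ hT₃) hT e₁ e₂
      (by change F.map g ≫ e₂.hom = e₁.hom ≫ T.mor₁; simp [hg])
    exact ⟨X₃, hS.cone_mem _ hT₃ hX₁ hX₂, ⟨Triangle.π₃.mapIso e⟩⟩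

lemma IsIteratedExtension.map (F : C ⥤ C) [F.CommShift ℤ] [F.IsTriangulated]
    {A : ℕ → Set C} {n : ℕ} {t : C} (ht : IsIteratedExtension A n t) :
    IsIteratedExtension (fun j => essImageSet F.obj (A j)) n (F.obj t) := by
  induction ht with
  | zero hz => exact .zero (F.map_isZero hz)
  | cons w g h hT ha _ ih =>
    exact .cons _ _ _ (F.map_distinguished _ hT) ⟨_, ha, ⟨Iso.refl _⟩⟩ ih

variable [τ.functor.CommShift ℤ] [τ.functor.IsTriangulated]

instance instCommShiftTwistFunctor : ∀ m, (twistFunctor τ m).CommShift ℤ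
  | 0 => inferInstanceAs ((𝟭 C).CommShift ℤ)
  | m + 1 =>
    have := instCommShiftTwistFunctor m
    inferInstanceAs ((twistFunctor τ m ⋙ τ.functor).CommShift ℤ)

instance instIsTriangulatedTwistFunctor : ∀ m, (twistFunctor τ m).IsTriangulated
  | 0 => inferInstanceAs (𝟭 C).IsTriangulated
  | m + 1 =>
    have := instIsTriangulatedTwistFunctor m
    inferInstanceAs (twistFunctor τ m ⋙ τ.functor).IsTriangulated

lemma IsTriangSub.twistSet {S : Set C} (hS : IsTriangSub S) (m : ℕ) :
    IsTriangSub (twistSet τ m S) :=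
  twistSet_natCast τ m S ▸ hS.essImageSet (twistFunctor τ m)

end Twist

section Lefschetz

open ZeroObject

variable [HasZeroObject C] [Preadditive C] [HasShift C ℤ]
  [∀ n : ℤ, (shiftFunctor C n).Additive] [Pretriangulated C]

variable {τ : C ≌ C} {i : ℕ} {A : ℕ → Set C}

namespace IsLefschetz

variable (hL : IsLefschetz τ i A) (hAtop : A i = {Z : C | IsZero Z})
include hL

lemma homOrth_component {l k : ℕ} (hlk : l < k) (hk : k < i) :
    HomOrth (twistSet τ k (A k)) (twistSet τ l (A l)) :=
  hL.sod.semiorth (l := ⟨l, by omega⟩) (k := ⟨k, hk⟩) hlk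

lemma isIteratedExtension_component (t : C) :
    IsIteratedExtension (fun j => twistSet τ j (A j)) i t :=
  .of_hasFiltration (fun _ => subset_rfl) (hL.sod.filt t)

section

variable [τ.functor.CommShift ℤ] [τ.functor.IsTriangulated]

lemma isIteratedExtension_twistSet_succ (t : C) :
    IsIteratedExtension (fun j => twistSet τ ↑(j + 1) (A j)) i t := by
  refine (((hL.isIteratedExtension_component (τ.inverse.obj t)).map τ.functor).mono
    fun j _ => ?_).of_iso (τ.counitIso.app t)
  rw [twistSet_natCast, twistSet_natCast]
  exact essImageSet_subset_essImageSet_comp _ _ _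

end

include hAtop

lemma isTriangSub {m : ℕ} (hm : m ≤ i) : IsTriangSub (A m) := by
  rcases hm.lt_or_eq with hm | rfl
  · exact (hL.adm m hm).1
  · exact hAtop ▸ isTriangSub_isZero

lemma antitone {a b : ℕ} (hab : a ≤ b) (hb : b ≤ i) : A b ⊆ A a := by
  induction b, hab using Nat.le_induction with
  | base => exact subset_rfl
  | succ b hab ih =>
    refine (?_ : A (b + 1) ⊆ A b).trans (ih (by omega))
    rcases hb.lt_or_eq with hb | hb
    · exact hL.desc b hb
    · rw [hb, hAtop]
      exact fun _ hZ => (hL.isTriangSub hAtop (by omega)).zero_mem hZ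

lemma twist_hom_eq_zero {c s t : ℕ} (hc : 0 < c) (hcs : c ≤ s) (hs : s < i) (ht : t ≤ i) :
    ∀ X ∈ A s, ∀ Y ∈ A t, ∀ g : (twistFunctor τ c).obj X ⟶ Y, g = 0 := by
  intro X hX Y hY g
  refine hL.homOrth_component hc (by omega) ?_ ?_ g
  · rw [twistSet_natCast]
    exact ⟨X, hL.antitone hAtop hcs hs.le hX, ⟨Iso.refl _⟩⟩
  · exact ⟨Y, hL.antitone hAtop (Nat.zero_le t) ht hY, ⟨Iso.refl _⟩⟩

lemma twistSet_subset_leftOrth {m : ℕ} (hm : 0 < m) (hmi : m ≤ i) :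
    twistSet τ m (A m) ⊆ leftOrth (A 0) := by
  rcases hmi.lt_or_eq with hmi | rfl
  · intro x hx Y hY f
    exact hL.homOrth_component hm hmi hx ⟨Y, hY, ⟨Iso.refl _⟩⟩ f
  · rw [twistSet_natCast, hAtop]
    rintro x ⟨Z, hZ, ⟨e⟩⟩ Y - f
    exact (((twistFunctor τ _).map_isZero hZ).of_iso e.symm).eq_of_src f 0

lemma primComp_isTriangSub {l : ℕ} (hl : l < i) : IsTriangSub (primComp A l) :=
  (hL.isTriangSub hAtop hl.le).inter
    (isTriangSub_rightOrth (hL.isTriangSub hAtop (Nat.succ_le_of_lt hl)).shift_closed)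

lemma homOrth_twistSet_succ {j m : ℕ} (hm : 0 < m) (hmj : m ≤ j) (hj : j < i) :
    HomOrth (twistSet τ ↑(j + 1) (A j)) (twistSet τ m (A m)) :=
  homOrth_twistSet (by omega) (hL.twist_hom_eq_zero hAtop (by omega) (by omega) hj (by omega))

lemma homOrth_primComp {l j : ℕ} (hlj : l < j) (hj : j < i) :
    HomOrth (twistSet τ ↑(j + 1) (primComp A j)) (twistSet τ ↑(l + 1) (primComp A l)) :=
  homOrth_twistSet (by omega) fun X hX Y hY =>
    hL.twist_hom_eq_zero hAtop (by omega) (by omega) hj (by omega) X hX.1 Y hY.1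

lemma mem_rightOrth_of_mem_twistSet_primComp {l m : ℕ} (hlm : l < m) (hm : m < i) {q : C}
    (hq : q ∈ twistSet τ ↑(l + 1) (primComp A l)) : q ∈ rightOrth (twistSet τ m (A m)) := by
  refine fun x hx => homOrth_twistSet (by omega) (fun X hX Y hY => ?_) hx hq
  rcases (Nat.succ_le_of_lt hlm).lt_or_eq with hlm | rfl
  · exact hL.twist_hom_eq_zero hAtop (by omega) (by omega) hm (by omega) X hX Y hY.1
  · rw [Nat.sub_self]
    exact hY.2 hX

lemma generated_subset_leftOrth {l : ℕ} (hl : l < i) :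
    generated (⋃ m ∈ Set.Icc 1 l, twistSet τ m (A m)) ⊆ leftOrth (A 0) :=
  generated_minimal (isTriangSub_leftOrth (hL.isTriangSub hAtop (Nat.zero_le i)).shift_closed)
    (Set.iUnion₂_subset fun _ hm => hL.twistSet_subset_leftOrth hAtop hm.1 (hm.2.trans hl.le))

lemma exists_distTriang_primComp {l : ℕ} (hl : l < i) {a : C} (ha : a ∈ A l) :
    ∃ (x q : C) (u : x ⟶ a) (v : a ⟶ q) (w : q ⟶ x⟦(1 : ℤ)⟧),
      Triangle.mk u v w ∈ distTriang C ∧ x ∈ A (l + 1) ∧ q ∈ primComp A l := by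
  rcases (show l + 1 ≤ i from hl).lt_or_eq with hl' | hl'
  · have := (hL.adm (l + 1) hl').2.2
    obtain ⟨x, q, u, v, w, hT, hx, hq⟩ := exists_distTriang_mem_rightOrth
      (hL.adm (l + 1) hl').1.shift_closed a
    exact ⟨x, q, u, v, w, hT, hx, (hL.isTriangSub hAtop hl.le).cone_mem _ hT
      (hL.antitone hAtop (Nat.le_succ l) hl'.le hx) ha, hq⟩
  · refine ⟨0, a, 0, 𝟙 a, 0, contractible_distinguished₁ a, ?_, ha, fun c hc f => ?_⟩
    · rw [hl', hAtop]
      exact isZero_zero C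
    · rw [hl', hAtop] at hc
      exact hc.eq_of_src f 0

lemma components_subset_twistSet {l k : ℕ} (hlk : l ≤ k) (hk : k ≤ i) :
    (⋃ m ∈ Set.Icc 1 l, twistSet τ m (A m)) ⊆
      ⋃ j : Fin k, twistSet τ ((j : ℕ) + 1 : ℤ) (A (j : ℕ)) := by
  refine Set.iUnion₂_subset fun m hm => ?_
  obtain ⟨n, rfl⟩ := Nat.exists_eq_add_of_le' hm.1
  exact Set.subset_iUnion_of_subset ⟨n, by have := hm.2; omega⟩
    (twistSet_mono (hL.antitone hAtop (Nat.le_succ n) (by have := hm.2; omega)))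

variable [τ.functor.CommShift ℤ] [τ.functor.IsTriangulated]

lemma generated_subset_rightOrth {l j : ℕ} (hlj : l ≤ j) (hj : j < i) :
    generated (⋃ m ∈ Set.Icc 1 l, twistSet τ m (A m)) ⊆ rightOrth (twistSet τ ↑(j + 1) (A j)) :=
  generated_minimal
    (isTriangSub_rightOrth ((hL.isTriangSub hAtop hj.le).twistSet (j + 1)).shift_closed)
    (Set.iUnion₂_subset fun _ hm _ hy _ hx f =>
      hL.homOrth_twistSet_succ hAtop hm.1 (hm.2.trans hlj) hj hx hy f)

lemma exists_distTriang_twistSet_primComp {l : ℕ} (hl : l < i) {a : C}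
    (ha : a ∈ twistSet τ ↑(l + 1) (A l)) :
    ∃ (x q : C) (u : x ⟶ a) (v : a ⟶ q) (w : q ⟶ x⟦(1 : ℤ)⟧),
      Triangle.mk u v w ∈ distTriang C ∧ x ∈ twistSet τ ↑(l + 1) (A (l + 1)) ∧
        q ∈ twistSet τ ↑(l + 1) (primComp A l) := by
  simp only [twistSet_natCast] at ha ⊢
  obtain ⟨a₀, ha₀, ⟨e⟩⟩ := ha
  obtain ⟨x, q, u, v, w, hT, hx, hq⟩ := hL.exists_distTriang_primComp hAtop hl ha₀
  exact ⟨_, _, _, _, _, distTriang_comp_iso₂ ((twistFunctor τ (l + 1)).map_distinguished _ hT) e,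
    ⟨x, hx, ⟨Iso.refl _⟩⟩, ⟨q, hq, ⟨Iso.refl _⟩⟩⟩

lemma exists_distTriang_isReflection {l : ℕ} (hl : l < i) {q : C}
    (hq : q ∈ twistSet τ ↑(l + 1) (primComp A l)) :
    ∃ (q' a : C) (u' : q' ⟶ q) (u : q ⟶ a) (w : a ⟶ q'⟦(1 : ℤ)⟧),
      Triangle.mk u' u w ∈ distTriang C ∧ IsReflection (A 0) u ∧
        q' ∈ generated (⋃ m ∈ Set.Icc 1 l, twistSet τ m (A m)) := by
  have hA0 := hL.isTriangSub hAtop (Nat.zero_le i)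
  have hext : IsIteratedExtension (fun j => twistSet τ j (A j)) (l + 1) q :=
    (hL.isIteratedExtension_component q).truncate
      (fun j hj => (hL.isTriangSub hAtop hj.le).twistSet j)
      (fun _ _ hlk hk => hL.homOrth_component hlk hk) hl
      (fun m hlm hm => hL.mem_rightOrth_of_mem_twistSet_primComp hAtop hlm hm hq)
  obtain _ | ⟨u', u, w, hT, ha, hext'⟩ := hext
  have hq' : _ ∈ generated (⋃ m ∈ Set.Icc 1 l, twistSet τ m (A m)) :=
    hext'.mem (isTriangSub_generated _) fun j hj =>
      (Set.subset_iUnion₂ (s := fun m (_ : m ∈ Set.Icc 1 l) => twistSet τ m (A m)) (j + 1)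
        ⟨by omega, by omega⟩).trans (subset_generated _)
  refine ⟨_, _, u', u, w, hT, isReflection_of_distTriang hA0.shift_closed hT
    ((twistSet_zero hA0.iso_mem).subset ha) (hL.generated_subset_leftOrth hAtop hl hq'), hq'⟩

lemma exists_lift_isReflection {l j : ℕ} (hlj : l ≤ j) (hj : j < i) {F G a : C}
    (hF : F ∈ twistSet τ ↑(j + 1) (primComp A j)) (hG : G ∈ twistSet τ ↑(l + 1) (primComp A l))
    {u : G ⟶ a} (hu : IsReflection (A 0) u) (f : F ⟶ a) : ∃ g : F ⟶ G, g ≫ u = f := by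
  obtain ⟨G', b, v', v, w, hT, hv, hG'⟩ := hL.exists_distTriang_isReflection hAtop (by omega) hG
  obtain ⟨e, rfl⟩ := hv.exists_iso hu
  have hw : (f ≫ e.inv) ≫ w = 0 := hL.generated_subset_rightOrth hAtop hlj hj
    ((isTriangSub_generated _).shift_mem 1 hG') (twistSet_mono (fun _ hX => hX.1) hF) _
  obtain ⟨g, hg⟩ : ∃ g : F ⟶ G, f ≫ e.inv = g ≫ v := Triangle.coyoneda_exact₃ _ hT _ hw
  exact ⟨g, by rw [← assoc, ← hg, assoc, e.inv_hom_id, comp_id]⟩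

lemma exists_isReflection_of_mem_twistSet {l : ℕ} (hl : l < i) {a : C}
    (ha : a ∈ twistSet τ ↑(l + 1) (A l)) :
    ∃ b, ∃ u : a ⟶ b, IsReflection (A 0) u ∧
      b ∈ reflectionImage (A 0) (twistSet τ ↑(l + 1) (primComp A l)) := by
  obtain ⟨x, q, u, v, w, hT, hx, hq⟩ := hL.exists_distTriang_twistSet_primComp hAtop hl ha
  obtain ⟨-, b, -, ub, -, -, hub, -⟩ := hL.exists_distTriang_isReflection hAtop hl hq
  have hx' : x ∈ leftOrth (A 0) := hL.twistSet_subset_leftOrth hAtop l.succ_pos hl hx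
  have hv : ∀ Y ∈ A 0, Function.Bijective (fun g : q ⟶ Y => v ≫ g) := fun Y hY =>
    precomp_bijective_of_distTriang hT (hx' hY) ((isTriangSub_leftOrth
      (hL.isTriangSub hAtop (Nat.zero_le i)).shift_closed).shift_mem 1 hx' hY)
  exact ⟨b, v ≫ ub, hub.precomp hv, q, hq, ub, hub⟩

lemma homOrth_reflectionImage {l j : ℕ} (hlj : l < j) (hj : j < i) :
    HomOrth (reflectionImage (A 0) (twistSet τ ↑(j + 1) (primComp A j)))
      (reflectionImage (A 0) (twistSet τ ↑(l + 1) (primComp A l))) := by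
  rintro x ⟨F, hF, u, hu⟩ y ⟨G, hG, v, hv⟩ f
  obtain ⟨g, hg⟩ := hL.exists_lift_isReflection hAtop hlj.le hj hF hG hv (u ≫ f)
  rw [hL.homOrth_primComp hAtop hlj hj hF hG g, zero_comp] at hg
  exact (hu.2 y hv.1).injective (hg.symm.trans comp_zero.symm)

lemma isTriangSub_reflectionImage_primComp {l : ℕ} (hl : l < i) :
    IsTriangSub (reflectionImage (A 0) (twistSet τ ↑(l + 1) (primComp A l))) :=
  isTriangSub_reflectionImage (hL.isTriangSub hAtop (Nat.zero_le i))
    ((hL.primComp_isTriangSub hAtop hl).twistSet (l + 1))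
    fun _ hq₁ _ hq₂ _ _ hu f => hL.exists_lift_isReflection hAtop le_rfl hl hq₁ hq₂ hu f

lemma isIteratedExtension_reflectionImage {t : C} (ht : t ∈ A 0) :
    IsIteratedExtension (fun j => reflectionImage (A 0) (twistSet τ ↑(j + 1) (primComp A j)))
      i t := by
  obtain ⟨G, u, hu, hG⟩ := (hL.isIteratedExtension_twistSet_succ t).exists_isReflection
    (hL.isTriangSub hAtop (Nat.zero_le i))
    fun j hj _ ha => hL.exists_isReflection_of_mem_twistSet hAtop hj ha
  obtain ⟨e, -⟩ := hu.exists_iso (isReflection_id ht)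
  exact hG.of_iso e

lemma reflectionImage_subset_generated {j k : ℕ} (hjk : j < k) (hk : k ≤ i) :
    reflectionImage (A 0) (twistSet τ ↑(j + 1) (primComp A j)) ⊆
      generated (⋃ j : Fin k, twistSet τ ((j : ℕ) + 1 : ℤ) (A (j : ℕ))) := by
  rintro x ⟨F, hF, u, hu⟩
  obtain ⟨F', b, v', v, w, hT, hv, hF'⟩ := hL.exists_distTriang_isReflection hAtop (by omega) hF
  obtain ⟨e, -⟩ := hv.exists_iso hu
  have hP := isTriangSub_generated (⋃ j : Fin k, twistSet τ ((j : ℕ) + 1 : ℤ) (A (j : ℕ)))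
  refine hP.iso_mem e (hP.cone_mem _ hT ?_ ?_)
  · exact generated_mono (hL.components_subset_twistSet hAtop hjk.le hk) hF'
  · exact subset_generated _ (Set.mem_iUnion.2 ⟨⟨j, hjk⟩, twistSet_mono (fun _ h => h.1) hF⟩)

lemma twistSet_subset_generated {j k : ℕ} (hjk : j < k) (hk : k ≤ i) :
    twistSet τ ↑(j + 1) (A j) ⊆
      generated ((⋃ j : Fin k, reflectionImage (A 0)
          (twistSet τ ((j : ℕ) + 1 : ℤ) (primComp A (j : ℕ)))) ∪
        ⋃ j : Fin k, twistSet τ ((j : ℕ) + 1 : ℤ) (A ((j : ℕ) + 1))) := by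
  intro a ha
  obtain ⟨x, q, u, v, w, hT, hx, hq⟩ := hL.exists_distTriang_twistSet_primComp hAtop (by omega) ha
  obtain ⟨q', b, u', ub, w', hT', hub, hq'⟩ := hL.exists_distTriang_isReflection hAtop (by omega) hq
  have hP := isTriangSub_generated ((⋃ j : Fin k, reflectionImage (A 0)
    (twistSet τ ((j : ℕ) + 1 : ℤ) (primComp A (j : ℕ)))) ∪
      ⋃ j : Fin k, twistSet τ ((j : ℕ) + 1 : ℤ) (A ((j : ℕ) + 1)))
  refine hP.ext_mem hT (subset_generated _ (Or.inr (Set.mem_iUnion.2 ⟨⟨j, hjk⟩, hx⟩)))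
    (hP.ext_mem hT' ?_ (subset_generated _ (Or.inl (Set.mem_iUnion.2 ⟨⟨j, hjk⟩, q, hq, ub, hub⟩))))
  exact generated_mono ((components_subset_twistSet_succ hjk.le).trans Set.subset_union_right) hq'

lemma generated_eq {k : ℕ} (hk : k ≤ i) :
    generated ((⋃ j : Fin k, reflectionImage (A 0)
        (twistSet τ ((j : ℕ) + 1 : ℤ) (primComp A (j : ℕ)))) ∪
      ⋃ j : Fin k, twistSet τ ((j : ℕ) + 1 : ℤ) (A ((j : ℕ) + 1))) =
    generated (⋃ j : Fin k, twistSet τ ((j : ℕ) + 1 : ℤ) (A (j : ℕ))) := by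
  refine subset_antisymm (generated_minimal (isTriangSub_generated _) (Set.union_subset
    (Set.iUnion_subset fun j => hL.reflectionImage_subset_generated hAtop j.2 hk)
    (Set.iUnion_subset fun j => ?_)))
    (generated_minimal (isTriangSub_generated _)
      (Set.iUnion_subset fun j => hL.twistSet_subset_generated hAtop j.2 hk))
  exact (twistSet_mono (hL.antitone hAtop (Nat.le_succ _) (by omega))).trans
    ((Set.subset_iUnion (fun j : Fin k => twistSet τ ((j : ℕ) + 1 : ℤ) (A (j : ℕ))) j).trans
      (subset_generated _))

end IsLefschetz

end Lefschetz

section Statements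

variable [HasZeroObject C] [Preadditive C] [HasShift C ℤ]
  [∀ n : ℤ, (shiftFunctor C n).Additive] [Pretriangulated C]

theorem statement0_general (τ : C ≌ C) [τ.functor.CommShift ℤ] [τ.functor.IsTriangulated]
    (i : ℕ) (A : ℕ → Set C) (hL : IsLefschetz τ i A)
    (hAtop : A i = {Z : C | IsZero Z})
    (π : C ⥤ ObjectProperty.FullSubcategory (· ∈ A 0))
    (adj : π ⊣ ObjectProperty.ι (· ∈ A 0))
    (k : ℕ) (hki : k ≤ i) :
    Semiorthogonal (fun j : Fin k =>
        projImageSet π (twistSet τ ((j : ℕ) + 1 : ℤ) (primComp A (j : ℕ)))) ∧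
    generated ((⋃ j : Fin k, projImageSet π (twistSet τ ((j : ℕ) + 1 : ℤ) (primComp A (j : ℕ)))) ∪
        (⋃ j : Fin k, twistSet τ ((j : ℕ) + 1 : ℤ) (A ((j : ℕ) + 1)))) =
      generated (⋃ j : Fin k, twistSet τ ((j : ℕ) + 1 : ℤ) (A (j : ℕ))) ∧
    (k = i → IsSODWithin (A 0) (fun j : Fin i =>
        projImageSet π (twistSet τ ((j : ℕ) + 1 : ℤ) (primComp A (j : ℕ))))) := by
  simp only [projImageSet_eq_reflectionImage (hL.isTriangSub hAtop (Nat.zero_le i)).iso_mem adj]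
  refine ⟨fun l j hlj => hL.homOrth_reflectionImage hAtop hlj (by omega), hL.generated_eq hAtop hki,
    ?_⟩
  rintro rfl
  exact ⟨fun _ _ ⟨_, _, _, hu⟩ => hu.1, fun j => hL.isTriangSub_reflectionImage_primComp hAtop j.2,
    fun l j hlj => hL.homOrth_reflectionImage hAtop hlj j.2,
    fun t ht => (hL.isIteratedExtension_reflectionImage hAtop ht).hasFiltration fun _ => subset_rfl⟩

/-- cf. Lemma 2.12 / `Lem. lem:sod:A_0`: given a Lefschetz decomposition
`T = ⟨A 0, (A 1)(1), …, (A (i-1))(i-1)⟩` and `1 ≤ k ≤ i`, the sequence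
`α₀^*(𝔞_0(1)), …, α₀^*(𝔞_{k-1}(k))` is semiorthogonal,
`⟨α₀^*(𝔞_0(1)), …, α₀^*(𝔞_{k-1}(k)), A 1 (1), …, A k (k)⟩ = ⟨A 0 (1), …, A (k-1) (k)⟩`,
and for `k = i` one obtains a semiorthogonal decomposition of `A 0`. -/
theorem statement0 (τ : C ≌ C) [τ.functor.CommShift ℤ] [τ.functor.IsTriangulated]
    (i : ℕ) (A : ℕ → Set C) (hL : IsLefschetz τ i A)
    (hAtop : A i = {Z : C | IsZero Z})
    (π : C ⥤ ObjectProperty.FullSubcategory (· ∈ A 0))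
    (adj : π ⊣ ObjectProperty.ι (· ∈ A 0))
    (k : ℕ) (hk1 : 1 ≤ k) (hki : k ≤ i) :
    Semiorthogonal (fun j : Fin k =>
        projImageSet π (twistSet τ ((j : ℕ) + 1 : ℤ) (primComp A (j : ℕ)))) ∧
    generated ((⋃ j : Fin k, projImageSet π (twistSet τ ((j : ℕ) + 1 : ℤ) (primComp A (j : ℕ)))) ∪
        (⋃ j : Fin k, twistSet τ ((j : ℕ) + 1 : ℤ) (A ((j : ℕ) + 1)))) =
      generated (⋃ j : Fin k, twistSet τ ((j : ℕ) + 1 : ℤ) (A (j : ℕ))) ∧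
    (k = i → IsSODWithin (A 0) (fun j : Fin i =>
        projImageSet π (twistSet τ ((j : ℕ) + 1 : ℤ) (primComp A (j : ℕ))))) :=
  statement0_general τ i A hL hAtop π adj k hki

end Statements
end HPD
end

section
/- Let T be a triangulated category, let D ⊆ T be an admissible full triangulated subcategory with inclusion i : D → T and left adjoint π := i^* : T → D, and let E ⊆ T be a full triangulated subcategory. Assume that for every b ∈ E the cone of the unit morphism b → i(π(b)) of the adjunction π ⊣ i lies in the right orthogonal E^⊥. Then the restriction of π to E is fully faithful: for all a, b ∈ E the map Hom_T(a, b) → Hom_D(π(a), π(b)) induced by π is bijective. -/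
/-!
Via the adjunction `π ⊣ i`, the map `φ ↦ π φ` on `Hom(a, b)` is identified with composition by
the unit `η_b : b ⟶ i (π b)`. Applying `Hom(a, -)` to the triangle `b ⟶ i (π b) ⟶ c ⟶ b⟦1⟧`
shows that this composition is bijective as soon as `Hom(a, c)` and `Hom(a⟦1⟧, c)` vanish, which
holds because `a, a⟦1⟧ ∈ E` and `c ∈ E^⊥`.
-/

namespace HPD

open CategoryTheory Category Limits Pretriangulated

universe w v u

variable {C : Type u} [Category.{v} C]

section

variable {D : Type*} [Category D]

theorem _root_.CategoryTheory.Adjunction.map_bijective_iff_comp_unit_bijective {F : C ⥤ D}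
    {G : D ⥤ C} (adj : F ⊣ G) (a b : C) :
    Function.Bijective (F.map : (a ⟶ b) → (F.obj a ⟶ F.obj b)) ↔
      Function.Bijective (fun φ : a ⟶ b => φ ≫ adj.unit.app b) := by
  have hcomp : (fun φ : a ⟶ b => φ ≫ adj.unit.app b) = adj.homEquiv a (F.obj b) ∘ F.map := by
    funext φ
    rw [Function.comp_apply, Adjunction.homEquiv_unit, adj.unit_naturality]
  rw [hcomp, Function.Bijective.of_comp_iff' (adj.homEquiv a (F.obj b)).bijective]

end

section Statements

variable [HasZeroObject C] [Preadditive C] [HasShift C ℤ]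
  [∀ n : ℤ, (shiftFunctor C n).Additive] [Pretriangulated C]

theorem _root_.CategoryTheory.Pretriangulated.Triangle.comp_mor₁_injective (T : Triangle C)
    (hT : T ∈ distTriang C) {A : C} (hA : ∀ f : A⟦(1 : ℤ)⟧ ⟶ T.obj₃, f = 0) :
    Function.Injective (fun φ : A ⟶ T.obj₁ => φ ≫ T.mor₁) := by
  intro φ₁ φ₂ hφ
  have hzero : (φ₁ - φ₂) ≫ (Triangle.invRotate T).mor₂ = 0 := by
    change (φ₁ - φ₂) ≫ T.mor₁ = 0
    rw [Preadditive.sub_comp, sub_eq_zero]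
    exact hφ
  obtain ⟨w, hw⟩ := Triangle.coyoneda_exact₂ _ (inv_rot_of_distTriang _ hT) _ hzero
  -- `w : A ⟶ T.obj₃⟦-1⟧` is zero because its shift, up to the counit `T.obj₃⟦-1⟧⟦1⟧ ≅ T.obj₃`,
  -- is a morphism `A⟦1⟧ ⟶ T.obj₃`
  have hw₀ : w = 0 := by
    apply (shiftFunctor C (1 : ℤ)).map_injective
    rw [Functor.map_zero]
    exact (cancel_mono ((shiftEquiv C (1 : ℤ)).counitIso.hom.app T.obj₃)).mp
      ((hA _).trans zero_comp.symm)
  rw [hw₀, zero_comp] at hw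
  exact sub_eq_zero.mp hw

theorem _root_.CategoryTheory.Pretriangulated.Triangle.comp_mor₁_surjective (T : Triangle C)
    (hT : T ∈ distTriang C) {A : C} (hA : ∀ f : A ⟶ T.obj₃, f = 0) :
    Function.Surjective (fun φ : A ⟶ T.obj₁ => φ ≫ T.mor₁) := fun ψ ↦
  (Triangle.coyoneda_exact₂ T hT ψ (hA _)).imp fun _ h ↦ h.symm

theorem statement3_general (D : Set C)
    (π : C ⥤ ObjectProperty.FullSubcategory (· ∈ D))
    (adj : π ⊣ ObjectProperty.ι (· ∈ D))
    (E : Set C) (hE : IsTriangSub E)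
    (hcone : ∀ b ∈ E, ∃ (c : C) (g : (π.obj b).obj ⟶ c) (h : c ⟶ b⟦(1 : ℤ)⟧),
      (Triangle.mk (adj.unit.app b) g h ∈ distTriang C) ∧ c ∈ rightOrth E) :
    ∀ a ∈ E, ∀ b ∈ E, Function.Bijective (fun φ : a ⟶ b => π.map φ) := by
  intro a ha b hb
  obtain ⟨c, g, h, hT, hc⟩ := hcone b hb
  exact (adj.map_bijective_iff_comp_unit_bijective a b).2
    ⟨Triangle.comp_mor₁_injective _ hT (hc (hE.shift_mem 1 ha)),
      Triangle.comp_mor₁_surjective _ hT (hc ha)⟩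

/-- let `D` be an admissible subcategory with inclusion `i` and left adjoint
`π`, and let `E` be a full triangulated subcategory.  If for every `b ∈ E` the cone of the
unit morphism `b ⟶ i (π b)` lies in `E^⊥`, then `π` is fully faithful on `E`. -/
theorem statement3 (D : Set C) (hD : IsAdmissible D)
    (π : C ⥤ ObjectProperty.FullSubcategory (· ∈ D))
    (adj : π ⊣ ObjectProperty.ι (· ∈ D))
    (E : Set C) (hE : IsTriangSub E)
    (hcone : ∀ b ∈ E, ∃ (c : C) (g : (π.obj b).obj ⟶ c) (h : c ⟶ b⟦(1 : ℤ)⟧),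
      (Triangle.mk (adj.unit.app b) g h ∈ distTriang C) ∧ c ∈ rightOrth E) :
    ∀ a ∈ E, ∀ b ∈ E, Function.Bijective (fun φ : a ⟶ b => π.map φ) :=
  statement3_general D π adj E hE hcone

end Statements
end HPD
end

section
/- Let T = ⟨A, B_1, …, B_m⟩ be a semiorthogonal decomposition of a triangulated category T in which A, B_1, …, B_m are all admissible. Then there is a natural isomorphism of endofunctors of T: i_A ∘ i_A^* ≅ L_{B_1} ∘ L_{B_2} ∘ … ∘ L_{B_m}, i.e. the projection onto the first component A (inclusion composed with the left adjoint of the inclusion of A) is computed by the composite of the left mutations through B_1, …, B_m. In particular, when m = 1 and T = ⟨A, B⟩, one has L_B ≅ i_A ∘ i_A^*. -/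
namespace HPD

open CategoryTheory Category Limits Pretriangulated

universe w v u

variable {C : Type u} [Category.{v} C]

/-!
Both sides are reflections onto the same subcategory. The left mutation `L_B` is the reflection
onto `B^⊥`. Since `Hom(B_j, B_1) = 0` for `j > 1`, `L_{B_1}` preserves each `B_j^⊥`: the cone of
`X → L_{B_1} X` is left orthogonal to `B_1^⊥`, hence a retract of an object of `B_1` (as `B_1` has
a right adjoint), and `L_{B_1} X` is an extension of it by `X`. By induction
`L_{B_1} ∘ ⋯ ∘ L_{B_m}` is the reflection onto `⋂_j B_j^⊥`, and the filtrations of the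
decomposition identify this intersection with `A`. Two reflections onto one subcategory are left
adjoints of its inclusion, hence isomorphic.
-/

structure IsReflection_s4 (S : Set C) (F : C ⥤ C) (θ : 𝟭 C ⟶ F) : Prop where
  obj_mem : ∀ X, F.obj X ∈ S
  bijective : ∀ X ⦃W : C⦄, W ∈ S → Function.Bijective fun g : F.obj X ⟶ W => θ.app X ≫ g

namespace IsReflection_s4

variable {S : Set C} {F G : C ⥤ C} {θ : 𝟭 C ⟶ F}

lemma of_adjunction {p : C ⥤ ObjectProperty.FullSubcategory (· ∈ S)}
    (adj : p ⊣ ObjectProperty.ι (· ∈ S)) :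
    IsReflection_s4 S (p ⋙ ObjectProperty.ι (· ∈ S)) adj.unit where
  obj_mem X := (p.obj X).property
  bijective X W hW := by
    have h : (fun g : (p ⋙ ObjectProperty.ι (· ∈ S)).obj X ⟶ W => adj.unit.app X ≫ g) =
        adj.homEquiv X ⟨W, hW⟩ ∘ ObjectProperty.homMk := by
      funext g
      rw [Function.comp_apply, Adjunction.homEquiv_unit]
      rfl
    rw [h]
    exact (adj.homEquiv X ⟨W, hW⟩).bijective.comp
      ⟨fun _ _ h => congrArg InducedCategory.Hom.hom h, ObjectProperty.homMk_surjective⟩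

lemma of_iso (hS : ∀ ⦃X Y : C⦄, (X ≅ Y) → X ∈ S → Y ∈ S) (h : IsReflection_s4 S F θ)
    (e : F ≅ G) : IsReflection_s4 S G (θ ≫ e.hom) where
  obj_mem X := hS (e.app X) (h.obj_mem X)
  bijective X W hW := by
    simpa [Function.comp_def] using (h.bijective X hW).comp (e.app X).symm.homFromEquiv.bijective

lemma comp {T : Set C} {η : 𝟭 C ⟶ G} (hF : IsReflection_s4 S F θ) (hG : IsReflection_s4 T G η)
    (hGS : ∀ X ∈ S, G.obj X ∈ S) :
    IsReflection_s4 (S ∩ T) (F ⋙ G) (θ ≫ F.rightUnitor.inv ≫ Functor.whiskerLeft F η) where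
  obj_mem X := ⟨hGS _ (hF.obj_mem X), hG.obj_mem _⟩
  bijective X W hW := by
    simpa [Function.comp_def] using (hF.bijective X hW.1).comp (hG.bijective (F.obj X) hW.2)

noncomputable def adjunction (h : IsReflection_s4 S F θ) :
    ObjectProperty.lift (· ∈ S) F h.obj_mem ⊣ ObjectProperty.ι (· ∈ S) :=
  Adjunction.mkOfHomEquiv
    { homEquiv X W := InducedCategory.homEquiv.trans
        (Equiv.ofBijective _ (h.bijective X W.property))
      homEquiv_naturality_left_symm f g := by
        rw [Equiv.symm_apply_eq]
        simp [InducedCategory.homEquiv, ← θ.naturality_assoc,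
          Equiv.ofBijective_apply_symm_apply (fun g => θ.app _ ≫ g)]
      homEquiv_naturality_right f g := by simp [InducedCategory.homEquiv] }

noncomputable def isoOfAdjunction (h : IsReflection_s4 S F θ)
    {p : C ⥤ ObjectProperty.FullSubcategory (· ∈ S)} (adj : p ⊣ ObjectProperty.ι (· ∈ S)) :
    p ⋙ ObjectProperty.ι (· ∈ S) ≅ F :=
  Functor.isoWhiskerRight (adj.leftAdjointUniq h.adjunction) _ ≪≫
    ObjectProperty.liftCompιIso _ _ _

end IsReflection_s4

lemma bijective_comp_counit_app {S : Set C} {ρ : C ⥤ ObjectProperty.FullSubcategory (· ∈ S)}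
    (adj : ObjectProperty.ι (· ∈ S) ⊣ ρ) (X : C) {b : C} (hb : b ∈ S) :
    Function.Bijective fun g : b ⟶ (ρ ⋙ ObjectProperty.ι (· ∈ S)).obj X =>
      g ≫ adj.counit.app X := by
  have h : (fun g : b ⟶ (ρ ⋙ ObjectProperty.ι (· ∈ S)).obj X => g ≫ adj.counit.app X) =
      (adj.homEquiv ⟨b, hb⟩ X).symm ∘ ObjectProperty.homMk := by
    funext g
    rw [Function.comp_apply, Adjunction.homEquiv_counit]
    rfl
  rw [h]
  exact (adj.homEquiv ⟨b, hb⟩ X).symm.bijective.comp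
    ⟨fun _ _ h => congrArg InducedCategory.Hom.hom h, ObjectProperty.homMk_surjective⟩

section Shift

variable [HasShift C ℤ] {S : Set C} (hS : ∀ (n : ℤ) ⦃X : C⦄, X ∈ S → X⟦n⟧ ∈ S)
include hS

lemma bijective_shift_comp {X Y : C} (φ : X ⟶ Y)
    (hφ : ∀ ⦃W : C⦄, W ∈ S → Function.Bijective fun g : Y ⟶ W => φ ≫ g) (n : ℤ) {W : C}
    (hW : W ∈ S) : Function.Bijective fun g : Y⟦n⟧ ⟶ W => φ⟦n⟧' ≫ g := by
  set a := (shiftEquiv C n).toAdjunction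
  have h : (fun g : Y⟦n⟧ ⟶ W => φ⟦n⟧' ≫ g) =
      (a.homEquiv X W).symm ∘ (fun g => φ ≫ g) ∘ a.homEquiv Y W := by
    funext g
    show φ⟦n⟧' ≫ g = (a.homEquiv X W).symm (φ ≫ a.homEquiv Y W g)
    erw [← Adjunction.homEquiv_naturality_left, Equiv.symm_apply_apply]
    rfl
  rw [h]
  exact ((a.homEquiv X W).symm.bijective.comp (hφ (hS (-n) hW))).comp (a.homEquiv Y W).bijective

lemma bijective_comp_shift {X Y : C} (ψ : X ⟶ Y)
    (hψ : ∀ ⦃b : C⦄, b ∈ S → Function.Bijective fun g : b ⟶ X => g ≫ ψ) (n : ℤ) {b : C}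
    (hb : b ∈ S) : Function.Bijective fun g : b ⟶ X⟦n⟧ => g ≫ ψ⟦n⟧' := by
  set a := (shiftEquiv C n).symm.toAdjunction
  have h : (fun g : b ⟶ X⟦n⟧ => g ≫ ψ⟦n⟧') =
      a.homEquiv b Y ∘ (fun g => g ≫ ψ) ∘ (a.homEquiv b X).symm := by
    funext g
    show g ≫ ψ⟦n⟧' = a.homEquiv b Y ((a.homEquiv b X).symm g ≫ ψ)
    erw [Adjunction.homEquiv_naturality_right, Equiv.apply_symm_apply]
    rfl
  rw [h]
  exact ((a.homEquiv b Y).bijective.comp (hψ (hS (-n) hb))).comp (a.homEquiv b X).symm.bijective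

end Shift

lemma mem_rightOrth_of_iso [Preadditive C] {S : Set C} {X Y : C} (e : X ≅ Y)
    (hX : X ∈ rightOrth S) : Y ∈ rightOrth S := by
  intro b hb f
  rw [← cancel_mono e.inv, zero_comp]
  exact hX hb _

lemma shift_mem_rightOrth [Preadditive C] [HasShift C ℤ] [∀ n : ℤ, (shiftFunctor C n).Additive]
    {S : Set C} (hS : ∀ (n : ℤ) ⦃X : C⦄, X ∈ S → X⟦n⟧ ∈ S) {X : C} (hX : X ∈ rightOrth S)
    (n : ℤ) : X⟦n⟧ ∈ rightOrth S := by
  intro b hb f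
  have hf : f⟦-n⟧' = 0 := by
    rw [← cancel_mono ((shiftFunctorCompIsoId C n (-n) (add_neg_cancel n)).hom.app X), zero_comp]
    exact hX (hS (-n) hb) _
  exact (shiftFunctor C (-n)).map_injective (by rw [hf, Functor.map_zero])

lemma Semiorthogonal.tail [Preadditive C] {n : ℕ} {A : Fin (n + 1) → Set C} (h : Semiorthogonal A) :
    Semiorthogonal (Fin.tail A) :=
  fun _ _ hlk => h (Fin.succ_lt_succ_iff.2 hlk)

section Triangulated

variable [HasZeroObject C] [Preadditive C] [HasShift C ℤ]
  [∀ n : ℤ, (shiftFunctor C n).Additive] [Pretriangulated C]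

lemma obj₂_mem_rightOrth {S : Set C} {T : Triangle C} (hT : T ∈ distTriang C)
    (h₁ : T.obj₁ ∈ rightOrth S) (h₃ : T.obj₃ ∈ rightOrth S) : T.obj₂ ∈ rightOrth S := by
  intro b hb f
  obtain ⟨g, rfl⟩ := Triangle.coyoneda_exact₂ T hT f (h₃ hb _)
  simp [h₁ hb g]

section Cone

variable {S : Set C} (hS : ∀ (n : ℤ) ⦃X : C⦄, X ∈ S → X⟦n⟧ ∈ S) {T : Triangle C}
  (hT : T ∈ distTriang C)
include hS hT

lemma obj₃_mem_leftOrth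
    (h : ∀ ⦃W : C⦄, W ∈ S → Function.Bijective fun g : T.obj₂ ⟶ W => T.mor₁ ≫ g) :
    T.obj₃ ∈ leftOrth S := by
  intro W hW f
  have hf : T.mor₂ ≫ f = 0 :=
    (h hW).1 (by simp [comp_distTriang_mor_zero₁₂_assoc _ hT])
  obtain ⟨g, rfl⟩ := Triangle.yoneda_exact₃ T hT f hf
  obtain ⟨g', rfl⟩ := (bijective_shift_comp hS T.mor₁ h 1 hW).2 g
  simp [comp_distTriang_mor_zero₃₁_assoc _ hT]

lemma obj₃_mem_rightOrth
    (h : ∀ ⦃b : C⦄, b ∈ S → Function.Bijective fun g : b ⟶ T.obj₁ => g ≫ T.mor₁) :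
    T.obj₃ ∈ rightOrth S := by
  intro b hb q
  have hq : q ≫ T.mor₃ = 0 :=
    (bijective_comp_shift hS T.mor₁ h 1 hb).1 (by simp [comp_distTriang_mor_zero₃₁ _ hT])
  obtain ⟨q', rfl⟩ := Triangle.coyoneda_exact₃ T hT q hq
  obtain ⟨q'', rfl⟩ := (h hb).2 q'
  simp [comp_distTriang_mor_zero₁₂ _ hT]

end Cone

/-- An object of `^⊥(B^⊥)` is a retract of its coreflection into `B`, since the cone of the
counit lies in `B^⊥`. -/
lemma leftOrth_rightOrth_subset_rightOrth {B B' : Set C}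
    (hB : ∀ (n : ℤ) ⦃X : C⦄, X ∈ B → X⟦n⟧ ∈ B) (hBρ : (ObjectProperty.ι (· ∈ B)).IsLeftAdjoint)
    (horth : HomOrth B' B) : leftOrth (rightOrth B) ⊆ rightOrth B' := by
  intro X hX b hb f
  obtain ⟨ρ, ⟨adj⟩⟩ := hBρ.exists_rightAdjoint
  obtain ⟨D, v, _, hT⟩ := distinguished_cocone_triangle (adj.counit.app X)
  have hD : D ∈ rightOrth B :=
    obj₃_mem_rightOrth hB hT fun _ hb => bijective_comp_counit_app adj X hb
  have : Epi (adj.counit.app X) := Triangle.epi₁ _ hT (hX hD v)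
  have := isSplitEpi_of_epi (adj.counit.app X)
  calc f = (f ≫ section_ (adj.counit.app X)) ≫ adj.counit.app X := by simp
    _ = 0 := by rw [horth hb (ρ.obj X).property (f ≫ _), zero_comp]

lemma IsReflection_s4.obj_mem_rightOrth {B B' : Set C} {G : C ⥤ C} {η : 𝟭 C ⟶ G}
    (hG : IsReflection_s4 (rightOrth B) G η) (hB : ∀ (n : ℤ) ⦃X : C⦄, X ∈ B → X⟦n⟧ ∈ B)
    (hBρ : (ObjectProperty.ι (· ∈ B)).IsLeftAdjoint) (horth : HomOrth B' B) {Z : C}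
    (hZ : Z ∈ rightOrth B') : G.obj Z ∈ rightOrth B' := by
  obtain ⟨K, _, _, hT⟩ := distinguished_cocone_triangle (η.app Z)
  have hK : K ∈ leftOrth (rightOrth B) :=
    obj₃_mem_leftOrth (fun n _ hW => shift_mem_rightOrth hB hW n) hT (hG.bijective Z)
  exact obj₂_mem_rightOrth hT hZ (leftOrth_rightOrth_subset_rightOrth hB hBρ horth hK)

lemma isReflection_compFam : ∀ {m : ℕ} {B : Fin m → Set C}, Semiorthogonal B →
    (∀ j, IsAdmissible (B j)) → ∀ {L : Fin m → C ⥤ C}, (∀ j, IsLeftMutation (B j) (L j)) →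
    ∃ θ, IsReflection_s4 (⋂ j, rightOrth (B j)) (compFam L) θ
  | 0, _, _, _, _, _ =>
    ⟨𝟙 _, ⟨fun _ => by simp, fun X W _ => by
      show Function.Bijective fun g : X ⟶ W => 𝟙 X ≫ g
      simp only [id_comp]
      exact Function.bijective_id⟩⟩
  | m + 1, B, hso, hB, L, hL => by
    obtain ⟨θ, hθ⟩ := isReflection_compFam hso.tail (fun j => hB j.succ) fun j => hL j.succ
    obtain ⟨p, ⟨adj⟩, ⟨e⟩⟩ := hL 0
    have h₀ : IsReflection_s4 (rightOrth (B 0)) (L 0) (adj.unit ≫ e.inv) :=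
      (IsReflection_s4.of_adjunction adj).of_iso (fun _ _ => mem_rightOrth_of_iso) e.symm
    have hθ₀ := hθ.comp h₀ fun X hX => Set.mem_iInter.2 fun j =>
      h₀.obj_mem_rightOrth (fun n _ h => (hB 0).1.shift_mem n h) (hB 0).2.2 (hso (Fin.succ_pos j))
        (Set.mem_iInter.1 hX j)
    have hS : (⋂ j, rightOrth (B j)) = (⋂ j, rightOrth (Fin.tail B j)) ∩ rightOrth (B 0) := by
      ext X
      simp [Fin.forall_fin_succ, Fin.tail, and_comm]
    exact ⟨_, hS ▸ hθ₀⟩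

lemma HasFiltration.exists_distTriang {n : ℕ} {A : Fin (n + 1) → Set C} {t : C}
    (h : HasFiltration A t) :
    ∃ (t' a : C) (f : t' ⟶ t) (g : t ⟶ a) (k : a ⟶ t'⟦(1 : ℤ)⟧),
      Triangle.mk f g k ∈ distTriang C ∧ a ∈ A 0 ∧ HasFiltration (Fin.tail A) t' := by
  obtain ⟨F, f, hlast, rfl, hcone⟩ := h
  obtain ⟨a, g, k, hT, ha⟩ := hcone 0
  exact ⟨F 1, a, f 0, g, k, hT, ha, fun j => F j.succ, fun j => f j.succ, hlast, rfl,
    fun j => hcone j.succ⟩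

lemma HasFiltration.mem_leftOrth : ∀ {n : ℕ} {A : Fin n → Set C} {t : C},
    HasFiltration A t → t ∈ leftOrth (⋂ j, rightOrth (A j))
  | 0, _, _, ⟨_, _, hlast, rfl, _⟩ => fun _ _ f => hlast.eq_of_src f 0
  | n + 1, A, _, h => by
    obtain ⟨t', a, f, g, _, hT, ha, ht'⟩ := h.exists_distTriang
    intro W hW u
    have hW' : W ∈ ⋂ j, rightOrth (Fin.tail A j) :=
      Set.mem_iInter.2 fun j => Set.mem_iInter.1 hW j.succ
    obtain ⟨u', rfl⟩ := Triangle.yoneda_exact₂ _ hT u (ht'.mem_leftOrth hW' _)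
    show g ≫ u' = 0
    rw [Set.mem_iInter.1 hW 0 ha u', comp_zero]

lemma IsSOD.eq_iInter_rightOrth {m : ℕ} {A : Set C} {B : Fin m → Set C}
    (h : IsSOD (Fin.cons A B : Fin (m + 1) → Set C)) : A = ⋂ j, rightOrth (B j) := by
  have hA : A ⊆ ⋂ j, rightOrth (B j) := fun a ha =>
    Set.mem_iInter.2 fun j _ hb f => h.semiorth (Fin.succ_pos j) hb ha f
  refine hA.antisymm fun X hX => ?_
  obtain ⟨t', a, _, g, _, hT, ha, ht'⟩ := (h.filt X).exists_distTriang
  have ht'X : t' ∈ ⋂ j, rightOrth (B j) := Set.mem_iInter.2 fun j =>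
    obj₂_mem_rightOrth (inv_rot_of_distTriang _ hT)
      (shift_mem_rightOrth (fun n _ hb => (h.triangSub j.succ).shift_mem n hb)
        (Set.mem_iInter.1 (hA ha) j) (-1))
      (Set.mem_iInter.1 hX j)
  have ht'0 : IsZero t' := (IsZero.iff_id_eq_zero _).2 (ht'.mem_leftOrth ht'X _)
  have : IsIso g := (Triangle.isZero₁_iff_isIso₂ _ hT).1 ht'0
  exact (h.triangSub 0).iso_mem (asIso g).symm ha

end Triangulated

section Statements

variable [HasZeroObject C] [Preadditive C] [HasShift C ℤ]
  [∀ n : ℤ, (shiftFunctor C n).Additive] [Pretriangulated C]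

theorem statement4_general {m : ℕ} (A : Set C) (B : Fin m → Set C)
    (hsod : IsSOD (Fin.cons A B : Fin (m + 1) → Set C))
    (hB : ∀ j, IsAdmissible (B j))
    (πA : C ⥤ ObjectProperty.FullSubcategory (· ∈ A))
    (adjA : πA ⊣ ObjectProperty.ι (· ∈ A))
    (L : Fin m → (C ⥤ C)) (hL : ∀ j, IsLeftMutation (B j) (L j)) :
    Nonempty ((πA ⋙ ObjectProperty.ι (· ∈ A)) ≅ compFam L) := by
  obtain ⟨θ, hθ⟩ := isReflection_compFam (B := B) hsod.semiorth.tail hB hL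
  rw [← hsod.eq_iInter_rightOrth] at hθ
  exact ⟨hθ.isoOfAdjunction adjA⟩

/-- for a semiorthogonal decomposition `T = ⟨A, B 0, …, B (m-1)⟩` with all
components admissible, the projection `i_A ∘ i_A^*` onto the first component is naturally
isomorphic to the composition `L_{B 0} ∘ L_{B 1} ∘ ⋯ ∘ L_{B (m-1)}` of left mutations. -/
theorem statement4 {m : ℕ} (A : Set C) (B : Fin m → Set C)
    (hsod : IsSOD (Fin.cons A B : Fin (m + 1) → Set C))
    (hA : IsAdmissible A) (hB : ∀ j, IsAdmissible (B j))
    (πA : C ⥤ ObjectProperty.FullSubcategory (· ∈ A))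
    (adjA : πA ⊣ ObjectProperty.ι (· ∈ A))
    (L : Fin m → (C ⥤ C)) (hL : ∀ j, IsLeftMutation (B j) (L j)) :
    Nonempty ((πA ⋙ ObjectProperty.ι (· ∈ A)) ≅ compFam L) :=
  statement4_general A B hsod hB πA adjA L hL

end Statements
end HPD
end

section
/- Let A be an admissible full triangulated subcategory of a triangulated category T and let L_A be the left mutation functor through A. Then: (i) L_A sends every object of A to a zero object; (ii) the restriction of L_A to the left orthogonal ^⊥A defines an equivalence of triangulated categories ^⊥A ≃ A^⊥; (iii) the restriction of L_A to A^⊥ is naturally isomorphic to the inclusion functor A^⊥ → T. -/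
namespace HPD

open CategoryTheory Category Limits Pretriangulated

universe w v u

variable {C : Type u} [Category.{v} C]

/-! Let `p ⊣ ι` be the reflection onto `A^⊥`. For `a ∈ A`, `Hom(p a, p a) ≅ Hom(a, p a) = 0`, so
`p a` is zero; and the counit `ι ⋙ p ≅ 𝟭` is invertible because `ι` is fully faithful.

For the equivalence: a morphism inducing bijections on maps into a shift-closed `Q` has its cone
in `^⊥Q`, and dually. Hence the unit `X ⟶ p X` has its fibre in `^⊥(A^⊥)`, which equals `A`
because the counit `r Z ⟶ Z` of the coreflection onto `A` has its cone in `A^⊥`. So composing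
with the unit does not change maps out of `^⊥A`, and `p` is fully faithful on `^⊥A`. For
`Y ∈ A^⊥`, the fibre `X ⟶ Y` of the unit `Y ⟶ ℓ Y` of the reflection onto `A` lies in `^⊥A` and
has its cone in `A`, so `p` inverts it and `p X ≅ Y`. -/

section Preadditive

variable [Preadditive C]

lemma rightOrth_eq (A : Set C) :
    (· ∈ rightOrth A) = ObjectProperty.rightOrthogonal (· ∈ A) := by
  ext Y
  exact ⟨fun h _ f hX => h hX f, fun h _ hX f => h f hX⟩

lemma leftOrth_eq (A : Set C) :
    (· ∈ leftOrth A) = ObjectProperty.leftOrthogonal (· ∈ A) := by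
  ext X
  exact ⟨fun h _ f hY => h hY f, fun h _ hY f => h f hY⟩

end Preadditive

lemma isZero_obj_of_leftOrthogonal [HasZeroMorphisms C] {R : ObjectProperty C}
    {p : C ⥤ R.FullSubcategory} (adj : p ⊣ R.ι) {X : C} (hX : R.leftOrthogonal X) :
    IsZero (p.obj X).obj := by
  rw [IsZero.iff_id_eq_zero]
  have h : adj.homEquiv X (p.obj X) (𝟙 _) =
      adj.homEquiv X (p.obj X) (ObjectProperty.homMk 0) :=
    (hX _ (p.obj X).property).trans (hX _ (p.obj X).property).symm
  exact congrArg (·.hom) ((adj.homEquiv X (p.obj X)).injective h)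

section Pretriangulated

open ObjectProperty ZeroObject

variable [HasZeroObject C] [Preadditive C] [HasShift C ℤ]
  [∀ n : ℤ, (shiftFunctor C n).Additive] [Pretriangulated C]

lemma IsTriangSub.isTriangulated {A : Set C} (hA : IsTriangSub A) :
    ObjectProperty.IsTriangulated (· ∈ A) where
  exists_zero := ⟨0, isZero_zero C, hA.zero_mem (isZero_zero C)⟩
  isStableUnderShiftBy n := ⟨fun _ hX => hA.shift_mem n hX⟩
  ext₂' _ hT h₁ h₃ := le_isoClosure _ _
    (hA.cone_mem _ (inv_rot_of_distTriang _ hT) (hA.shift_mem _ h₃) h₁)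

lemma IsTriangSub.isClosedUnderIsomorphisms {A : Set C} (hA : IsTriangSub A) :
    ObjectProperty.IsClosedUnderIsomorphisms (· ∈ A) :=
  ⟨fun e hX => hA.iso_mem e hX⟩

section StableUnderShift

variable (P : ObjectProperty C) [P.IsStableUnderShift ℤ]

lemma isLocal_le_trW_leftOrthogonal : P.isLocal ≤ P.leftOrthogonal.trW := by
  intro X Y f hf
  obtain ⟨Z, g, h, hT⟩ := distinguished_cocone_triangle f
  refine ⟨Z, g, h, hT, fun y u hy => ?_⟩
  have hfg : f ≫ g = 0 := comp_distTriang_mor_zero₁₂ _ hT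
  have hhf : h ≫ f⟦(1 : ℤ)⟧' = 0 := comp_distTriang_mor_zero₃₁ _ hT
  have hgu : g ≫ u = 0 := (hf y hy).1 (by simp [reassoc_of% hfg])
  obtain ⟨v, rfl⟩ : ∃ v : X⟦(1 : ℤ)⟧ ⟶ y, u = h ≫ v := Triangle.yoneda_exact₃ _ hT u hgu
  let e : y⟦(-1 : ℤ)⟧⟦(1 : ℤ)⟧ ≅ y := (shiftEquiv C (1 : ℤ)).counitIso.app y
  obtain ⟨w', hw'⟩ := (shiftFunctor C (1 : ℤ)).map_surjective (v ≫ e.inv)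
  obtain ⟨w, hw : f ≫ w = w'⟩ := (hf _ (P.le_shift (-1) _ hy)).2 w'
  have hv : v = f⟦(1 : ℤ)⟧' ≫ w⟦(1 : ℤ)⟧' ≫ e.hom := by
    rw [← Functor.map_comp_assoc, hw, hw', assoc, e.inv_hom_id, comp_id]
  rw [hv, reassoc_of% hhf, zero_comp]

lemma isColocal_le_trW_rightOrthogonal : P.isColocal ≤ P.rightOrthogonal.trW := by
  intro X Y f hf
  obtain ⟨Z, g, h, hT⟩ := distinguished_cocone_triangle f
  refine ⟨Z, g, h, hT, fun x u hx => ?_⟩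
  have hfg : f ≫ g = 0 := comp_distTriang_mor_zero₁₂ _ hT
  have hhf : h ≫ f⟦(1 : ℤ)⟧' = 0 := comp_distTriang_mor_zero₃₁ _ hT
  let e : x⟦(-1 : ℤ)⟧⟦(1 : ℤ)⟧ ≅ x := (shiftEquiv C (1 : ℤ)).counitIso.app x
  obtain ⟨ψ, hψ⟩ := (shiftFunctor C (1 : ℤ)).map_surjective (e.hom ≫ u ≫ h)
  have hψf : ψ ≫ f = 0 := (shiftFunctor C (1 : ℤ)).map_injective (by simp [hψ, hhf])
  have hψ₀ : ψ = 0 := (hf _ (P.le_shift (-1) _ hx)).1 (hψf.trans zero_comp.symm)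
  have huh : u ≫ h = 0 := by
    rw [← cancel_epi e.hom, comp_zero, ← hψ, hψ₀, Functor.map_zero]
  obtain ⟨v, rfl⟩ : ∃ v : x ⟶ Y, u = v ≫ g := Triangle.coyoneda_exact₃ _ hT u huh
  obtain ⟨w, rfl⟩ := (hf x hx).2 v
  simp [hfg]

variable [P.IsClosedUnderIsomorphisms] [P.ι.IsLeftAdjoint]

lemma leftOrthogonal_rightOrthogonal_le : P.rightOrthogonal.leftOrthogonal ≤ P := by
  intro Z hZ
  let adj := Adjunction.ofIsLeftAdjoint P.ι
  let ε := adj.counit.app Z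
  have hε : P.isColocal ε := fun X hX => isColocal_adj_counit_app adj Z X ⟨⟨X, hX⟩, rfl⟩
  rw [← isColocal_trW] at hZ
  obtain ⟨s, hs : s ≫ ε = 𝟙 Z⟩ :=
    (hZ ε (isColocal_le_trW_rightOrthogonal P _ hε)).2 (𝟙 Z)
  have : IsIso ε := ⟨s, (hε _ (P.ι.rightAdjoint.obj Z).property).1 (by simp [hs]), hs⟩
  exact P.prop_of_iso (asIso ε) (P.ι.rightAdjoint.obj Z).property

lemma trW_adj_unit_app {p : C ⥤ P.rightOrthogonal.FullSubcategory}
    (adj : p ⊣ P.rightOrthogonal.ι) (X : C) : P.trW (adj.unit.app X) :=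
  trW_monotone (leftOrthogonal_rightOrthogonal_le P) _
    (isLocal_le_trW_leftOrthogonal _ _ fun Y hY =>
      isLocal_adj_unit_app adj X Y ⟨⟨Y, hY⟩, rfl⟩)

end StableUnderShift

variable (P : ObjectProperty C) [P.IsTriangulated] {p : C ⥤ P.rightOrthogonal.FullSubcategory}

lemma leftOrthogonal_ι_comp_map_bijective [P.IsClosedUnderIsomorphisms] [P.ι.IsLeftAdjoint]
    (adj : p ⊣ P.rightOrthogonal.ι) (X₁ X₂ : P.leftOrthogonal.FullSubcategory) :
    Function.Bijective ((P.leftOrthogonal.ι ⋙ p).map : (X₁ ⟶ X₂) → _) := by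
  have hX₁ : P.trW.isColocal X₁.obj := by rw [isColocal_trW]; exact X₁.property
  rw [← (adj.homEquiv _ _).bijective.of_comp_iff']
  convert (hX₁ _ (trW_adj_unit_app P adj X₂.obj)).comp
    P.leftOrthogonal.fullyFaithfulι.homEquiv.bijective using 1
  · rfl
  · funext f
    exact (adj.homEquiv_unit _ _ _).trans (adj.unit.naturality f.hom).symm

lemma leftOrthogonal_ι_comp_essSurj [P.ι.IsRightAdjoint] (adj : p ⊣ P.rightOrthogonal.ι) :
    (P.leftOrthogonal.ι ⋙ p).EssSurj := by
  refine ⟨fun Y => ?_⟩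
  let adjℓ := Adjunction.ofIsRightAdjoint P.ι
  have hη : P.leftOrthogonal.trW (adjℓ.unit.app Y.obj) := isLocal_le_trW_leftOrthogonal P _
    fun Z hZ => isLocal_adj_unit_app adjℓ _ Z ⟨⟨Z, hZ⟩, rfl⟩
  obtain ⟨X, m, h, hT, hX⟩ := (P.leftOrthogonal.trW_iff' _).1 hη
  have hm : P.rightOrthogonal.isLocal m := fun Z hZ => by
    rw [← isLocal_trW] at hZ
    exact hZ m (trW.mk P hT (P.ι.leftAdjoint.obj Y.obj).property)
  have : IsIso (p.map m) :=
    (isLocal_iff_isIso_map adj m).1 fun _ ⟨Z, hZ⟩ => hZ ▸ hm _ Z.property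
  exact ⟨⟨X, hX⟩, ⟨asIso (p.map m) ≪≫ asIso (adj.counit.app Y)⟩⟩

theorem isEquivalence_leftOrthogonal_ι_comp [P.IsClosedUnderIsomorphisms] [P.ι.IsRightAdjoint]
    [P.ι.IsLeftAdjoint] (adj : p ⊣ P.rightOrthogonal.ι) :
    (P.leftOrthogonal.ι ⋙ p).IsEquivalence where
  faithful := ⟨@fun X₁ X₂ => (leftOrthogonal_ι_comp_map_bijective P adj X₁ X₂).1⟩
  full := ⟨@fun X₁ X₂ => (leftOrthogonal_ι_comp_map_bijective P adj X₁ X₂).2⟩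
  essSurj := leftOrthogonal_ι_comp_essSurj P adj

end Pretriangulated

section Statements

variable [HasZeroObject C] [Preadditive C] [HasShift C ℤ]
  [∀ n : ℤ, (shiftFunctor C n).Additive] [Pretriangulated C]

/-- letting `p ⊣ i_{A^⊥}` exhibit the left mutation `L_A = i_{A^⊥} ∘ p`
through an admissible subcategory `A`, one has: (i) `L_A` kills the objects of `A`;
(ii) the restriction of `L_A` to `^⊥A`, i.e. the functor `i_{^⊥A} ⋙ p`, is an equivalence
`^⊥A ≌ A^⊥`; (iii) the restriction of `L_A` to `A^⊥` is naturally isomorphic to the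
inclusion `A^⊥ ⥤ T`. -/
theorem statement6 (A : Set C) (hA : IsAdmissible A)
    (p : C ⥤ ObjectProperty.FullSubcategory (· ∈ rightOrth A))
    (adj : p ⊣ ObjectProperty.ι (· ∈ rightOrth A)) :
    (∀ a ∈ A, IsZero ((p.obj a).obj)) ∧
    (ObjectProperty.ι (· ∈ leftOrth A) ⋙ p).IsEquivalence ∧
    Nonempty ((ObjectProperty.ι (· ∈ rightOrth A) ⋙
        (p ⋙ ObjectProperty.ι (· ∈ rightOrth A))) ≅
      ObjectProperty.ι (· ∈ rightOrth A)) := by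
  obtain ⟨hA, hℓ, hr⟩ := hA
  refine ⟨fun a ha => isZero_obj_of_leftOrthogonal adj fun _ f hY => hY ha f, ?_,
    ⟨(Functor.associator _ _ _).symm ≪≫ Functor.isoWhiskerRight (asIso adj.counit) _ ≪≫
      Functor.leftUnitor _⟩⟩
  have := hA.isTriangulated
  have := hA.isClosedUnderIsomorphisms
  -- `rightOrth_eq` changes the type of `p`, so `p` is transported along it
  generalize hR : (· ∈ rightOrth A) = R at p adj
  rw [rightOrth_eq] at hR
  subst hR
  rw [leftOrth_eq]
  exact isEquivalence_leftOrthogonal_ι_comp _ adj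

end Statements
end HPD
end
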